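/- arXiv:2004.01493 — 7 statements merged into one kernel-verified Lean document; each statement's English description precedes it below -/
import Mathlib

section
/- For all distinct indices i, j ∈ {1,…,n}, LF(i) < LF(j) holds if and only if either L[i] ≺ L[j], or L[i] = L[j] and i < j. -/
/-- 1-based access to the `i`-th character of `T`. -/
def idx (T : List ℕ) (i : ℕ) : ℕ := T.getD (i - 1) 0

/-- The suffix `T[i..n]` (1-based). -/
def sufx (T : List ℕ) (i : ℕ) : List ℕ := T.drop (i - 1)

/-- Occurrence positions of `P` in `T`: `Occ(T,P) = {i ∈ [1, n−|P|+1] : P = T[i..i+|P|−1]}`. -/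
def OccF (T P : List ℕ) : Finset ℕ :=
  (Finset.Icc 1 (T.length - P.length + 1)).filter (fun i => P <+: T.drop (i - 1))

/-- `children(P) = {Pc : c ∈ Σ, Pc is a substring of T}`. -/
def childrenSet (σ : ℕ) (T P : List ℕ) : Set (List ℕ) :=
  {Q | ∃ c ∈ Finset.Icc 1 σ, Q = P ++ [c] ∧ (P ++ [c]) <:+: T}

/-- Starting positions of the maximal runs of equal characters in `L[1..n]`. -/
def SstartSet (n : ℕ) (L : ℕ → ℕ) : Finset ℕ :=
  (Finset.Icc 1 n).filter (fun i => i = 1 ∨ L i ≠ L (i - 1))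

/-- `rank(S, i) = |{j ∈ S : j ≤ i}|`. -/
def rankOf (S : Finset ℕ) (i : ℕ) : ℕ := (S.filter (fun j => j ≤ i)).card

/-- `(c, p, q)` is an answer of the range distinct query `RD(S, b, e)`:
`c` occurs in `S[b..e]`, and `p`, `q` are the first and last occurrences of `c` in `[b,e]`. -/
def RDmem (S : ℕ → ℕ) (b e c p q : ℕ) : Prop :=
  p ∈ Finset.Icc b e ∧ S p = c ∧ (∀ i ∈ Finset.Icc b e, S i = c → p ≤ i) ∧
  q ∈ Finset.Icc b e ∧ S q = c ∧ (∀ i ∈ Finset.Icc b e, S i = c → i ≤ q)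

/-- `[b,e]` is the suffix-tree interval of `P`: the positions `i ∈ [1,n]` whose suffix
`T[SA[i]..n]` has `P` as a prefix are exactly `{b,…,e}`. -/
def isIntervalOf (n : ℕ) (T : List ℕ) (SA : ℕ → ℕ) (P : List ℕ) (b e : ℕ) : Prop :=
  1 ≤ b ∧ e ≤ n ∧ ∀ i ∈ Finset.Icc 1 n, (P <+: sufx T (SA i) ↔ i ∈ Finset.Icc b e)

/-- Length of the longest common prefix of two lists. -/
def lcpLen : List ℕ → List ℕ → ℕ
  | a :: as, b :: bs => if a = b then lcpLen as bs + 1 else 0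
  | _, _ => 0

/-- `𝓛_t`: substrings of `T` of length `t` whose suffix-tree node is explicit. -/
def LsetD (σ t : ℕ) (T : List ℕ) : Set (List ℕ) :=
  {P | P <:+: T ∧ P.length = t ∧ 2 ≤ (childrenSet σ T P).ncard}

/-- `K_t = ⋃_{P ∈ 𝓛_t} children(P)`. -/
def KsetD (σ t : ℕ) (T : List ℕ) : Set (List ℕ) :=
  {Q | ∃ P ∈ LsetD σ t T, Q ∈ childrenSet σ T P}

/-- `K'_t`: members of `K_t` that are not the last child of their parent, i.e. whose
interval has a right endpoint different from that of the parent's interval. -/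
def KpsetD (σ n t : ℕ) (T : List ℕ) (SA : ℕ → ℕ) : Set (List ℕ) :=
  {Q | ∃ P ∈ LsetD σ t T, Q ∈ childrenSet σ T P ∧
    ∃ b e b' e' : ℕ, isIntervalOf n T SA P b e ∧ isIntervalOf n T SA Q b' e' ∧ e' ≠ e}



lemma sufx_cons (T : List ℕ) (m : ℕ) (h1 : 1 ≤ m) (h2 : m ≤ T.length) :
    sufx T m = idx T m :: sufx T (m + 1) := by
  have hlt : m - 1 < T.length := by omega
  have : T.drop (m - 1) = T[m-1] :: T.drop (m - 1 + 1) := List.drop_eq_getElem_cons hlt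
  rw [sufx, this, idx, List.getD_eq_getElem _ _ hlt]
  congr 1
  · simp [sufx]
    congr 1
    omega

lemma lex_asymm {a b : List ℕ} (h : List.Lex (· < ·) a b) (h' : List.Lex (· < ·) b a) :
    False := asymm h h'

theorem stmt0
    (σ n : ℕ) (T : List ℕ)
    (hn : 2 ≤ n) (hlen : T.length = n)
    (halpha : ∀ c ∈ T, c ∈ Finset.Icc 1 σ)
    (hocc : ∀ c ∈ Finset.Icc 1 σ, c ∈ T)
    (hdollar : ∀ i ∈ Finset.Icc 1 (n - 1), idx T i ≠ idx T n)
    (SA : ℕ → ℕ)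
    (hSA_mem : ∀ i ∈ Finset.Icc 1 n, SA i ∈ Finset.Icc 1 n)
    (hSA_surj : ∀ j ∈ Finset.Icc 1 n, ∃ i ∈ Finset.Icc 1 n, SA i = j)
    (hSA_sorted : ∀ i j, i ∈ Finset.Icc 1 n → j ∈ Finset.Icc 1 n → i < j →
      List.Lex (· < ·) (sufx T (SA i)) (sufx T (SA j)))
    (LF : ℕ → ℕ)
    (hLF_mem : ∀ i ∈ Finset.Icc 1 n, LF i ∈ Finset.Icc 1 n)
    (hLF : ∀ i ∈ Finset.Icc 1 n, SA i ≠ 1 → SA (LF i) = SA i - 1)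
    (hLF1 : ∀ i ∈ Finset.Icc 1 n, SA i = 1 → SA (LF i) = n)
    (L : ℕ → ℕ)
    (hL : ∀ i ∈ Finset.Icc 1 n, L i = idx T (SA (LF i)))
 :
    ∀ i ∈ Finset.Icc 1 n, ∀ j ∈ Finset.Icc 1 n, i ≠ j →
      (LF i < LF j ↔ (L i < L j ∨ (L i = L j ∧ i < j))) := by
  classical
  have hmem : ∀ k, k ∈ Finset.Icc 1 n ↔ 1 ≤ k ∧ k ≤ n := by simp [Finset.mem_Icc]
  -- SA is injective
  have hSAinj : ∀ i ∈ Finset.Icc 1 n, ∀ j ∈ Finset.Icc 1 n, SA i = SA j → i = j := by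
    intro i hi j hj hij
    by_contra hne
    rcases lt_trichotomy i j with h | h | h
    · exact lex_asymm (hij ▸ hSA_sorted i j hi hj h) (hij ▸ hSA_sorted i j hi hj h)
    · exact hne h
    · exact lex_asymm (hij ▸ hSA_sorted j i hj hi h) (hij ▸ hSA_sorted j i hj hi h)
  -- key one-directional lemma
  have key : ∀ i ∈ Finset.Icc 1 n, ∀ j ∈ Finset.Icc 1 n, i ≠ j →
      (L i < L j ∨ (L i = L j ∧ i < j)) → LF i < LF j := by
    intro i hi j hj hne hR
    have hai := hLF_mem i hi
    have haj := hLF_mem j hj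
    have hSAi := (hmem _).1 (hSA_mem i hi)
    have hSAj := (hmem _).1 (hSA_mem j hj)
    have hSAai := (hmem _).1 (hSA_mem _ hai)
    have hSAaj := (hmem _).1 (hSA_mem _ haj)
    have hLi : L i = idx T (SA (LF i)) := hL i hi
    have hLj : L j = idx T (SA (LF j)) := hL j hj
    have hconsi : sufx T (SA (LF i)) = L i :: sufx T (SA (LF i) + 1) := by
      rw [hLi]; exact sufx_cons T _ hSAai.1 (by omega)
    have hconsj : sufx T (SA (LF j)) = L j :: sufx T (SA (LF j) + 1) := by
      rw [hLj]; exact sufx_cons T _ hSAaj.1 (by omega)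
    have hlex : List.Lex (· < ·) (sufx T (SA (LF i))) (sufx T (SA (LF j))) := by
      rcases hR with hlt | ⟨heq, hij⟩
      · rw [hconsi, hconsj]; exact List.Lex.rel hlt
      · have hne1i : SA i ≠ 1 := by
          intro h1
          have hSAn : SA (LF i) = n := hLF1 i hi h1
          have h1j : SA j ≠ 1 := fun h1j =>
            hne (hSAinj i hi j hj (by rw [h1, h1j]))
          have hSAjm : SA (LF j) = SA j - 1 := hLF j hj h1j
          have hd : idx T (SA j - 1) ≠ idx T n := by
            apply hdollar; rw [Finset.mem_Icc]; omega
          apply hd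
          rw [← hSAjm, ← hLj, ← heq, hLi, hSAn]
        have hne1j : SA j ≠ 1 := by
          intro h1
          have hSAn : SA (LF j) = n := hLF1 j hj h1
          have hSAim : SA (LF i) = SA i - 1 := hLF i hi hne1i
          have hd : idx T (SA i - 1) ≠ idx T n := by
            apply hdollar; rw [Finset.mem_Icc]; omega
          apply hd
          rw [← hSAim, ← hLi, heq, hLj, hSAn]
        have hSAim : SA (LF i) = SA i - 1 := hLF i hi hne1i
        have hSAjm : SA (LF j) = SA j - 1 := hLF j hj hne1j
        have htail : List.Lex (· < ·) (sufx T (SA i)) (sufx T (SA j)) :=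
          hSA_sorted i j hi hj hij
        have htaili : sufx T (SA (LF i) + 1) = sufx T (SA i) := by
          rw [hSAim]; congr 1; omega
        have htailj : sufx T (SA (LF j) + 1) = sufx T (SA j) := by
          rw [hSAjm]; congr 1; omega
        rw [hconsi, hconsj, htaili, htailj, heq]
        exact List.Lex.cons htail
    rcases lt_trichotomy (LF i) (LF j) with h | h | h
    · exact h
    · exact absurd hlex (by rw [h]; exact fun hc => lex_asymm hc hc)
    · exact absurd (hSA_sorted _ _ haj hai h) (fun hc => lex_asymm hlex hc)
  intro i hi j hj hne
  constructor
  · intro hLF_lt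
    by_contra hR
    push_neg at hR
    have hR' : L j < L i ∨ (L j = L i ∧ j < i) := by
      rcases lt_trichotomy (L i) (L j) with h | h | h
      · exact absurd h (not_lt.2 hR.1)
      · right
        refine ⟨h.symm, ?_⟩
        have := hR.2 h
        omega
      · left; exact h
    exact absurd hLF_lt (not_lt.2 (le_of_lt (key j hj i hi (Ne.symm hne) hR')))
  · exact key i hi j hj hne
end

section
/- For every i ∈ {1,…,n}, LF(i) = C[L[i]] + |{j ∈ [1,i] : L[j] = L[i]}|, where C[c] = |{i ∈ [1,n] : T[i] ≺ c}| for each character c ∈ Σ. -/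
private lemma sufx_cons_aux (T : List ℕ) (n j : ℕ) (hlen : T.length = n)
    (h1 : 1 ≤ j) (h2 : j ≤ n) : sufx T j = idx T j :: T.drop j := by
  have hj : j - 1 < T.length := by omega
  unfold sufx idx
  rw [List.drop_eq_getElem_cons hj, List.getD_eq_getElem _ _ hj,
    show j - 1 + 1 = j by omega]

private lemma lex_head_le_aux {a b : ℕ} {s t : List ℕ}
    (h : List.Lex (· < ·) (a::s) (b::t)) : a ≤ b := by
  cases h with
  | cons h => exact le_rfl
  | rel h => exact h.le


theorem stmt1
    (σ n : ℕ) (T : List ℕ)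
    (hn : 2 ≤ n) (hlen : T.length = n)
    (halpha : ∀ c ∈ T, c ∈ Finset.Icc 1 σ)
    (hocc : ∀ c ∈ Finset.Icc 1 σ, c ∈ T)
    (hdollar : ∀ i ∈ Finset.Icc 1 (n - 1), idx T i ≠ idx T n)
    (SA : ℕ → ℕ)
    (hSA_mem : ∀ i ∈ Finset.Icc 1 n, SA i ∈ Finset.Icc 1 n)
    (hSA_surj : ∀ j ∈ Finset.Icc 1 n, ∃ i ∈ Finset.Icc 1 n, SA i = j)
    (hSA_sorted : ∀ i j, i ∈ Finset.Icc 1 n → j ∈ Finset.Icc 1 n → i < j →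
      List.Lex (· < ·) (sufx T (SA i)) (sufx T (SA j)))
    (LF : ℕ → ℕ)
    (hLF_mem : ∀ i ∈ Finset.Icc 1 n, LF i ∈ Finset.Icc 1 n)
    (hLF : ∀ i ∈ Finset.Icc 1 n, SA i ≠ 1 → SA (LF i) = SA i - 1)
    (hLF1 : ∀ i ∈ Finset.Icc 1 n, SA i = 1 → SA (LF i) = n)
    (L : ℕ → ℕ)
    (hL : ∀ i ∈ Finset.Icc 1 n, L i = idx T (SA (LF i)))
 :
    ∀ i ∈ Finset.Icc 1 n,
      LF i = ((Finset.Icc 1 n).filter (fun j => idx T j < L i)).card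
           + ((Finset.Icc 1 i).filter (fun j => L j = L i)).card := by
  intro i hi
  have hi' := Finset.mem_Icc.mp hi
  have hQ : ∀ j ∈ Finset.Icc 1 n, 1 ≤ SA j ∧ SA j ≤ n :=
    fun j hj => Finset.mem_Icc.mp (hSA_mem j hj)
  have hSAinj : ∀ j ∈ Finset.Icc 1 n, ∀ k ∈ Finset.Icc 1 n, SA j = SA k → j = k := by
    intro j hj k hk hjk
    rcases lt_trichotomy j k with h | h | h
    · have h2 := hSA_sorted j k hj hk h
      rw [hjk] at h2
      exact ((asymm h2) h2).elim
    · exact h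
    · have h2 := hSA_sorted k j hk hj h
      rw [hjk] at h2
      exact ((asymm h2) h2).elim
  have hmono : ∀ j ∈ Finset.Icc 1 n, ∀ k ∈ Finset.Icc 1 n, j < k →
      idx T (SA j) ≤ idx T (SA k) := by
    intro j hj k hk hjk
    have h1 := hQ j hj; have h2 := hQ k hk
    have hl := hSA_sorted j k hj hk hjk
    rw [sufx_cons_aux T n (SA j) hlen h1.1 h1.2,
        sufx_cons_aux T n (SA k) hlen h2.1 h2.2] at hl
    exact lex_head_le_aux hl
  have hmono' : ∀ j ∈ Finset.Icc 1 n, ∀ k ∈ Finset.Icc 1 n, j ≤ k →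
      idx T (SA j) ≤ idx T (SA k) := by
    intro j hj k hk hjk
    rcases eq_or_lt_of_le hjk with rfl | h
    · exact le_rfl
    · exact hmono j hj k hk h
  have hLFinj : ∀ j ∈ Finset.Icc 1 n, ∀ k ∈ Finset.Icc 1 n, LF j = LF k → j = k := by
    intro j hj k hk hjk
    have hQj := hQ j hj; have hQk := hQ k hk
    by_cases h1 : SA j = 1 <;> by_cases h2 : SA k = 1
    · exact hSAinj j hj k hk (by rw [h1, h2])
    · have e1 := hLF1 j hj h1
      have e2 := hLF k hk h2
      rw [hjk, e2] at e1
      omega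
    · have e1 := hLF1 k hk h2
      have e2 := hLF j hj h1
      rw [← hjk, e2] at e1
      omega
    · have e1 := hLF j hj h1
      have e2 := hLF k hk h2
      rw [hjk, e2] at e1
      exact hSAinj j hj k hk (by omega)
  have hLFsurj : ∀ k ∈ Finset.Icc 1 n, ∃ j ∈ Finset.Icc 1 n, LF j = k := by
    intro k hk
    obtain ⟨a, ha, hae⟩ := Finset.surj_on_of_inj_on_of_card_le
      (s := Finset.Icc 1 n) (t := Finset.Icc 1 n) (fun a _ => LF a)
      (fun a ha => hLF_mem a ha)
      (fun a₁ a₂ ha₁ ha₂ h => hLFinj a₁ ha₁ a₂ ha₂ h) le_rfl k hk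
    exact ⟨a, ha, hae.symm⟩
  have hconsLF : ∀ j ∈ Finset.Icc 1 n, SA j ≠ 1 →
      sufx T (SA (LF j)) = L j :: sufx T (SA j) := by
    intro j hj hne
    have hQj := hQ j hj
    have e := hLF j hj hne
    have h1 : 1 ≤ SA j - 1 := by omega
    have h2 : SA j - 1 ≤ n := by omega
    have hLj : L j = idx T (SA j - 1) := by rw [hL j hj, e]
    rw [e, sufx_cons_aux T n (SA j - 1) hlen h1 h2, hLj]
    rfl
  have hdol : ∀ j ∈ Finset.Icc 1 n, ∀ k ∈ Finset.Icc 1 n, L j = L k →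
      SA j = 1 → SA k = 1 := by
    intro j hj k hk hLjk h1
    by_contra h2
    have hQk := hQ k hk
    have e1 := hLF1 j hj h1
    have e2 := hLF k hk h2
    have heq : idx T (SA k - 1) = idx T n := by
      rw [← e1, ← e2, ← hL j hj, ← hL k hk, hLjk]
    exact hdollar (SA k - 1) (Finset.mem_Icc.mpr (by omega)) heq
  have horder : ∀ j ∈ Finset.Icc 1 n, ∀ k ∈ Finset.Icc 1 n, L j = L k →
      j < k → LF j < LF k := by
    intro j hj k hk hLjk hjk
    by_cases h1 : SA j = 1
    · have hx := hdol j hj k hk hLjk h1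
      have := hSAinj j hj k hk (by omega)
      omega
    by_cases h2 : SA k = 1
    · exact absurd (hdol k hk j hj hLjk.symm h2) h1
    have hlex := hSA_sorted j k hj hk hjk
    have hl2 : List.Lex (· < ·) (sufx T (SA (LF j))) (sufx T (SA (LF k))) := by
      rw [hconsLF j hj h1, hconsLF k hk h2, hLjk]
      exact List.Lex.cons hlex
    rcases lt_trichotomy (LF j) (LF k) with h | h | h
    · exact h
    · rw [h] at hl2
      exact ((asymm hl2) hl2).elim
    · exact absurd hl2 (asymm (hSA_sorted (LF k) (LF j) (hLF_mem k hk) (hLF_mem j hj) h))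
  have hLFi := Finset.mem_Icc.mp (hLF_mem i hi)
  have hc : idx T (SA (LF i)) = L i := (hL i hi).symm
  set S1 := (Finset.Icc 1 n).filter (fun k => idx T (SA k) < L i) with hS1
  set S2 := (Finset.Icc 1 n).filter (fun k => idx T (SA k) = L i ∧ k ≤ LF i) with hS2
  have fact2 : ∀ k ∈ Finset.Icc 1 n, idx T (SA k) < L i → k < LF i := by
    intro k hk hlt
    by_contra h
    push_neg at h
    have hle := hmono' (LF i) (hLF_mem i hi) k hk h
    rw [hc] at hle
    omega
  have hsplit : (Finset.Icc 1 n).filter (fun k => k ≤ LF i) = S1 ∪ S2 := by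
    ext a
    simp only [hS1, hS2, Finset.mem_union, Finset.mem_filter]
    constructor
    · rintro ⟨ha, hle⟩
      have hle2 : idx T (SA a) ≤ L i := by
        have := hmono' a ha (LF i) (hLF_mem i hi) hle
        rwa [hc] at this
      rcases lt_or_eq_of_le hle2 with h | h
      · exact Or.inl ⟨ha, h⟩
      · exact Or.inr ⟨ha, h, hle⟩
    · rintro (⟨ha, h⟩ | ⟨ha, _, hle⟩)
      · exact ⟨ha, (fact2 a ha h).le⟩
      · exact ⟨ha, hle⟩
  have hdisj : Disjoint S1 S2 := by
    rw [Finset.disjoint_left]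
    intro a ha1 ha2
    simp only [hS1, hS2, Finset.mem_filter] at ha1 ha2
    omega
  have htop : (Finset.Icc 1 n).filter (fun k => k ≤ LF i) = Finset.Icc 1 (LF i) := by
    ext a
    simp only [Finset.mem_filter, Finset.mem_Icc]
    omega
  have hcard : LF i = S1.card + S2.card := by
    rw [← Finset.card_union_of_disjoint hdisj, ← hsplit, htop, Nat.card_Icc]
    omega
  have hS1card : S1.card = ((Finset.Icc 1 n).filter (fun j => idx T j < L i)).card := by
    apply Finset.card_bij (fun k _ => SA k)
    · intro a ha
      simp only [hS1, Finset.mem_filter] at ha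
      simp only [Finset.mem_filter]
      exact ⟨hSA_mem a ha.1, ha.2⟩
    · intro a₁ ha₁ a₂ ha₂ h
      simp only [hS1, Finset.mem_filter] at ha₁ ha₂
      exact hSAinj a₁ ha₁.1 a₂ ha₂.1 h
    · intro b hb
      simp only [Finset.mem_filter] at hb
      obtain ⟨a, ha, rfl⟩ := hSA_surj b hb.1
      refine ⟨a, ?_, rfl⟩
      simp only [hS1, Finset.mem_filter]
      exact ⟨ha, hb.2⟩
  have hS2card : ((Finset.Icc 1 i).filter (fun j => L j = L i)).card = S2.card := by
    apply Finset.card_bij (fun j _ => LF j)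
    · intro a ha
      simp only [Finset.mem_filter, Finset.mem_Icc] at ha
      have ha' : a ∈ Finset.Icc 1 n := Finset.mem_Icc.mpr (by omega)
      simp only [hS2, Finset.mem_filter]
      refine ⟨hLF_mem a ha', ?_, ?_⟩
      · rw [← hL a ha', ha.2]
      · rcases eq_or_lt_of_le ha.1.2 with rfl | h
        · exact le_rfl
        · exact (horder a ha' i hi ha.2 h).le
    · intro a₁ ha₁ a₂ ha₂ h
      simp only [Finset.mem_filter, Finset.mem_Icc] at ha₁ ha₂
      exact hLFinj a₁ (Finset.mem_Icc.mpr (by omega)) a₂ (Finset.mem_Icc.mpr (by omega)) h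
    · intro b hb
      simp only [hS2, Finset.mem_filter] at hb
      obtain ⟨j, hjmem, hje⟩ := hLFsurj b hb.1
      have hLj : L j = L i := by
        rw [hL j hjmem, hje, hb.2.1]
      have hji : j ≤ i := by
        by_contra h
        push_neg at h
        have := horder i hi j hjmem hLj.symm h
        omega
      have hjm := Finset.mem_Icc.mp hjmem
      refine ⟨j, ?_, hje⟩
      simp only [Finset.mem_filter, Finset.mem_Icc]
      exact ⟨⟨hjm.1, hji⟩, hLj⟩
  rw [hcard, hS1card, ← hS2card]
end

section
/- Let L' = L[ℓ(1)] L[ℓ(2)] ⋯ L[ℓ(r)] be the string formed by the first characters of the runs of L. For all positions 1 ≤ b ≤ e ≤ n, letting b' = rank(S_start, b) and e' = rank(S_start, e), it holds that RD(L, b, e) = {(c, max{ℓ(p), b}, min{ℓ(q+1) − 1, e}) : (c, p, q) ∈ RD(L', b', e')}. -/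
theorem stmt6
    (σ n : ℕ) (T : List ℕ)
    (hn : 2 ≤ n) (hlen : T.length = n)
    (halpha : ∀ c ∈ T, c ∈ Finset.Icc 1 σ)
    (hocc : ∀ c ∈ Finset.Icc 1 σ, c ∈ T)
    (hdollar : ∀ i ∈ Finset.Icc 1 (n - 1), idx T i ≠ idx T n)
    (SA : ℕ → ℕ)
    (hSA_mem : ∀ i ∈ Finset.Icc 1 n, SA i ∈ Finset.Icc 1 n)
    (hSA_surj : ∀ j ∈ Finset.Icc 1 n, ∃ i ∈ Finset.Icc 1 n, SA i = j)
    (hSA_sorted : ∀ i j, i ∈ Finset.Icc 1 n → j ∈ Finset.Icc 1 n → i < j →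
      List.Lex (· < ·) (sufx T (SA i)) (sufx T (SA j)))
    (LF : ℕ → ℕ)
    (hLF_mem : ∀ i ∈ Finset.Icc 1 n, LF i ∈ Finset.Icc 1 n)
    (hLF : ∀ i ∈ Finset.Icc 1 n, SA i ≠ 1 → SA (LF i) = SA i - 1)
    (hLF1 : ∀ i ∈ Finset.Icc 1 n, SA i = 1 → SA (LF i) = n)
    (L : ℕ → ℕ)
    (hL : ∀ i ∈ Finset.Icc 1 n, L i = idx T (SA (LF i)))
    (r : ℕ) (hr : r = (SstartSet n L).card)
    (ell : ℕ → ℕ)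
    (hell_mono : ∀ i j : ℕ, 1 ≤ i → i < j → j ≤ r + 1 → ell i < ell j)
    (hell_mem : ∀ i ∈ Finset.Icc 1 r, ell i ∈ SstartSet n L)
    (hell_surj : ∀ x ∈ SstartSet n L, ∃ i ∈ Finset.Icc 1 r, ell i = x)
    (hell_last : ell (r + 1) = n + 1)
 :
    ∀ b e : ℕ, 1 ≤ b → b ≤ e → e ≤ n →
      ∀ c p q : ℕ,
        RDmem L b e c p q ↔
          ∃ p' q' : ℕ,
            RDmem (fun i => L (ell i)) (rankOf (SstartSet n L) b) (rankOf (SstartSet n L) e)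
              c p' q' ∧
            p = max (ell p') b ∧ q = min (ell (q' + 1) - 1) e := by
  clear hlen halpha hocc hdollar hSA_mem hSA_surj hSA_sorted hLF_mem hLF hLF1 hL
  set S := SstartSet n L with hSdef
  have hSsub : ∀ x ∈ S, 1 ≤ x ∧ x ≤ n := by
    intro x hx
    exact Finset.mem_Icc.mp (Finset.mem_filter.mp hx).1
  have hone : (1:ℕ) ∈ S := by
    refine Finset.mem_filter.mpr ⟨Finset.mem_Icc.mpr ⟨le_rfl, by omega⟩, Or.inl rfl⟩
  have hr1 : 1 ≤ r := by
    obtain ⟨i, hi, _⟩ := hell_surj 1 hone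
    rw [Finset.mem_Icc] at hi
    omega
  have hellmem : ∀ k, 1 ≤ k → k ≤ r → 1 ≤ ell k ∧ ell k ≤ n := by
    intro k h1 h2
    exact hSsub _ (hell_mem k (Finset.mem_Icc.mpr ⟨h1, h2⟩))
  have hell1 : ell 1 = 1 := by
    obtain ⟨i, hi, hei⟩ := hell_surj 1 hone
    rw [Finset.mem_Icc] at hi
    rcases Nat.eq_or_lt_of_le hi.1 with h | h
    · rw [← h] at hei; exact hei
    · have := hell_mono 1 i le_rfl h (by omega)
      have h1 := hellmem 1 le_rfl hr1
      omega
  have hellmono' : ∀ i j, 1 ≤ i → i ≤ j → j ≤ r + 1 → ell i ≤ ell j := by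
    intro i j h1 h2 h3
    rcases Nat.eq_or_lt_of_le h2 with h | h
    · rw [h]
    · exact le_of_lt (hell_mono i j h1 h h3)
  -- characterization of rank
  have hrank : ∀ i, 1 ≤ i → i ≤ n →
      1 ≤ rankOf S i ∧ rankOf S i ≤ r ∧ ell (rankOf S i) ≤ i ∧ i < ell (rankOf S i + 1) := by
    intro i h1 h2
    set A : Finset ℕ := (Finset.Icc 1 r).filter (fun j => ell j ≤ i) with hA
    have himg : S.filter (fun x => x ≤ i) = A.image ell := by
      ext x
      simp only [Finset.mem_filter, Finset.mem_image, hA, Finset.mem_Icc]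
      constructor
      · rintro ⟨hxS, hxi⟩
        obtain ⟨j, hj, hji⟩ := hell_surj x hxS
        rw [Finset.mem_Icc] at hj
        exact ⟨j, ⟨hj, by omega⟩, hji⟩
      · rintro ⟨j, ⟨⟨hj1, hj2⟩, hji⟩, rfl⟩
        exact ⟨hell_mem j (Finset.mem_Icc.mpr ⟨hj1, hj2⟩), hji⟩
    have hAne : 1 ∈ A := by
      refine Finset.mem_filter.mpr ⟨Finset.mem_Icc.mpr ⟨le_rfl, hr1⟩, by omega⟩
    set m := A.max' ⟨1, hAne⟩ with hm
    have hmA : m ∈ A := A.max'_mem _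
    have hmax : ∀ x ∈ A, x ≤ m := fun x hx => A.le_max' x hx
    have hmfil := Finset.mem_filter.mp hmA
    have hmIcc := Finset.mem_Icc.mp hmfil.1
    have hAeq : A = Finset.Icc 1 m := by
      ext x
      constructor
      · intro hx
        have hxf := Finset.mem_filter.mp hx
        have hxI := Finset.mem_Icc.mp hxf.1
        exact Finset.mem_Icc.mpr ⟨hxI.1, hmax x hx⟩
      · intro hx
        have hxI := Finset.mem_Icc.mp hx
        have : ell x ≤ ell m := hellmono' x m hxI.1 hxI.2 (by omega)
        exact Finset.mem_filter.mpr ⟨Finset.mem_Icc.mpr ⟨hxI.1, by omega⟩, by omega⟩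
    have hinj : Set.InjOn ell ↑A := by
      intro a ha b hb hab
      rw [hAeq] at ha hb
      simp only [Finset.coe_Icc, Set.mem_Icc] at ha hb
      by_contra h
      rcases Nat.lt_or_ge a b with hlt | hge
      · have := hell_mono a b ha.1 hlt (by omega); omega
      · have hlt : b < a := by omega
        have := hell_mono b a hb.1 hlt (by omega); omega
    have hcard : rankOf S i = m := by
      rw [rankOf, himg, Finset.card_image_of_injOn hinj, hAeq, Nat.card_Icc]
      omega
    rw [hcard]
    refine ⟨hmIcc.1, hmIcc.2, hmfil.2, ?_⟩
    rcases Nat.eq_or_lt_of_le hmIcc.2 with h | h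
    · rw [h, hell_last]; omega
    · by_contra hc
      push_neg at hc
      have hmem : m + 1 ∈ A :=
        Finset.mem_filter.mpr ⟨Finset.mem_Icc.mpr ⟨by omega, by omega⟩, hc⟩
      have := hmax _ hmem; omega
  have hrankeq : ∀ i k, 1 ≤ i → i ≤ n → 1 ≤ k → k ≤ r → ell k ≤ i → i < ell (k+1) →
      rankOf S i = k := by
    intro i k h1 h2 hk1 hk2 hki hik
    obtain ⟨ha, hb', hc, hd⟩ := hrank i h1 h2
    by_contra hne
    rcases Nat.lt_or_ge (rankOf S i) k with h | h
    · have : ell (rankOf S i + 1) ≤ ell k := hellmono' _ k (by omega) (by omega) (by omega)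
      omega
    · have hlt : k < rankOf S i := by omega
      have : ell (k+1) ≤ ell (rankOf S i) := hellmono' (k+1) _ (by omega) hlt (by omega)
      omega
  have hrankmono : ∀ i j, i ≤ j → rankOf S i ≤ rankOf S j := by
    intro i j hij
    apply Finset.card_le_card
    intro x hx
    rw [Finset.mem_filter] at hx ⊢
    exact ⟨hx.1, le_trans hx.2 hij⟩
  -- L is constant on runs
  have hconst : ∀ k, 1 ≤ k → k ≤ r → ∀ i, ell k ≤ i → i < ell (k+1) → i ≤ n →
      L i = L (ell k) := by
    intro k hk1 hk2 i
    induction i using Nat.strong_induction_on with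
    | _ i ih =>
      intro hki hik hin
      rcases Nat.eq_or_lt_of_le hki with h | h
      · rw [h]
      · have hek := hellmem k hk1 hk2
        have hiS : i ∉ S := by
          intro hmem
          obtain ⟨j, hj, hji⟩ := hell_surj i hmem
          rw [Finset.mem_Icc] at hj
          have hkj : k < j := by
            by_contra hcon
            push_neg at hcon
            have := hellmono' j k hj.1 hcon (by omega); omega
          have := hellmono' (k+1) j (by omega) hkj (by omega)
          omega
        have heq : L i = L (i - 1) := by
          by_contra hne
          exact hiS (Finset.mem_filter.mpr
            ⟨Finset.mem_Icc.mpr ⟨by omega, hin⟩, Or.inr hne⟩)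
        rw [heq]
        exact ih (i-1) (by omega) (by omega) (by omega) (by omega)
  intro b e hb hbe hen
  obtain ⟨hb'1, hb'r, hbl, hbu⟩ := hrank b hb (le_trans hbe hen)
  obtain ⟨he'1, he'r, hel, heu⟩ := hrank e (le_trans hb hbe) hen
  have hb'e' : rankOf S b ≤ rankOf S e := hrankmono b e hbe
  have hkey : ∀ k, rankOf S b ≤ k → k ≤ rankOf S e →
      (b ≤ max (ell k) b ∧ max (ell k) b ≤ e ∧ L (max (ell k) b) = L (ell k) ∧
        rankOf S (max (ell k) b) = k) ∧
      (b ≤ min (ell (k+1) - 1) e ∧ min (ell (k+1) - 1) e ≤ e ∧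
        L (min (ell (k+1) - 1) e) = L (ell k) ∧ rankOf S (min (ell (k+1) - 1) e) = k) := by
    intro k hk1 hk2
    have hkr : k ≤ r := le_trans hk2 he'r
    have hk1' : 1 ≤ k := le_trans hb'1 hk1
    have hke : ell k ≤ e := le_trans (hellmono' k (rankOf S e) hk1' hk2 (by omega)) hel
    have hk1k : ell k < ell (k+1) := hell_mono k (k+1) hk1' (by omega) (by omega)
    have hbk1 : b < ell (k+1) :=
      lt_of_lt_of_le hbu (hellmono' (rankOf S b + 1) (k+1) (by omega) (by omega) (by omega))
    have hmax_lt : max (ell k) b < ell (k+1) := by omega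
    have hLm : L (max (ell k) b) = L (ell k) :=
      hconst k hk1' hkr _ (le_max_left _ _) hmax_lt (by omega)
    have hrm : rankOf S (max (ell k) b) = k :=
      hrankeq _ k (by omega) (by omega) hk1' hkr (le_max_left _ _) hmax_lt
    have hMb : b ≤ min (ell (k+1) - 1) e := by omega
    have hke' : ell k ≤ min (ell (k+1) - 1) e := by omega
    have hM_lt : min (ell (k+1) - 1) e < ell (k+1) := by omega
    have hLM : L (min (ell (k+1) - 1) e) = L (ell k) :=
      hconst k hk1' hkr _ hke' hM_lt (by omega)
    have hrM : rankOf S (min (ell (k+1) - 1) e) = k :=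
      hrankeq _ k (by omega) (by omega) hk1' hkr hke' hM_lt
    exact ⟨⟨le_max_right _ _, by omega, hLm, hrm⟩, ⟨hMb, min_le_right _ _, hLM, hrM⟩⟩
  have hpos : ∀ i, b ≤ i → i ≤ e →
      rankOf S b ≤ rankOf S i ∧ rankOf S i ≤ rankOf S e ∧ L i = L (ell (rankOf S i)) ∧
      ell (rankOf S i) ≤ i ∧ i < ell (rankOf S i + 1) := by
    intro i h1 h2
    obtain ⟨hi1, hir, hil, hiu⟩ := hrank i (by omega) (by omega)
    exact ⟨hrankmono b i h1, hrankmono i e h2,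
      hconst _ hi1 hir i hil hiu (by omega), hil, hiu⟩
  intro c p q
  simp only [RDmem, Finset.mem_Icc]
  constructor
  · rintro ⟨⟨hpb, hpe⟩, hpc, hpmin, ⟨hqb, hqe⟩, hqc, hqmax⟩
    obtain ⟨hp1, hp2, hp3, hp4, hp5⟩ := hpos p hpb hpe
    obtain ⟨hq1, hq2, hq3, hq4, hq5⟩ := hpos q hqb hqe
    refine ⟨rankOf S p, rankOf S q, ⟨⟨hp1, hp2⟩, by rw [← hp3, hpc], ?_,
      ⟨hq1, hq2⟩, by rw [← hq3, hqc], ?_⟩, ?_, ?_⟩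
    · intro k hk hkc
      obtain ⟨⟨hm1, hm2, hm3, hm4⟩, _⟩ := hkey k hk.1 hk.2
      have hple : p ≤ max (ell k) b := hpmin _ ⟨hm1, hm2⟩ (by rw [hm3]; exact hkc)
      have := hrankmono p (max (ell k) b) hple
      omega
    · intro k hk hkc
      obtain ⟨_, ⟨hM1, hM2, hM3, hM4⟩⟩ := hkey k hk.1 hk.2
      have hqle : min (ell (k+1) - 1) e ≤ q := hqmax _ ⟨hM1, hM2⟩ (by rw [hM3]; exact hkc)
      have := hrankmono (min (ell (k+1) - 1) e) q hqle
      omega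
    · obtain ⟨⟨hm1, hm2, hm3, _⟩, _⟩ := hkey (rankOf S p) hp1 hp2
      have hple : p ≤ max (ell (rankOf S p)) b :=
        hpmin _ ⟨hm1, hm2⟩ (by rw [hm3, ← hp3]; exact hpc)
      omega
    · obtain ⟨_, ⟨hM1, hM2, hM3, _⟩⟩ := hkey (rankOf S q) hq1 hq2
      have hqge : min (ell (rankOf S q + 1) - 1) e ≤ q :=
        hqmax _ ⟨hM1, hM2⟩ (by rw [hM3, ← hq3]; exact hqc)
      omega
  · rintro ⟨p', q', ⟨⟨hp'b, hp'e⟩, hp'c, hp'min, ⟨hq'b, hq'e⟩, hq'c, hq'max⟩, rfl, rfl⟩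
    obtain ⟨⟨hm1, hm2, hm3, _⟩, _⟩ := hkey p' hp'b hp'e
    obtain ⟨_, ⟨hM1, hM2, hM3, _⟩⟩ := hkey q' hq'b hq'e
    refine ⟨⟨hm1, hm2⟩, by rw [hm3]; exact hp'c, ?_, ⟨hM1, hM2⟩, by rw [hM3]; exact hq'c, ?_⟩
    · intro i hi hic
      obtain ⟨hi1, hi2, hi3, hi4, hi5⟩ := hpos i hi.1 hi.2
      have hpk : p' ≤ rankOf S i := hp'min _ ⟨hi1, hi2⟩ (by rw [← hi3]; exact hic)
      have : ell p' ≤ ell (rankOf S i) :=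
        hellmono' p' (rankOf S i) (by omega) hpk (by omega)
      omega
    · intro i hi hic
      obtain ⟨hi1, hi2, hi3, hi4, hi5⟩ := hpos i hi.1 hi.2
      have hqk : rankOf S i ≤ q' := hq'max _ ⟨hi1, hi2⟩ (by rw [← hi3]; exact hic)
      have : ell (rankOf S i + 1) ≤ ell (q' + 1) :=
        hellmono' _ _ (by omega) (by omega) (by omega)
      omega
end

section
/- For every i ∈ {1,…,n}, LCP[i] = LCP[LF_{dist(i)}(i)] − dist(i). -/
/-!
Within a run of the BWT, the suffixes at `i - 1` and `i` are preceded by the same character `c`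
(neither is the whole text, since `$` occurs only once). Prepending `c` keeps them adjacent in
the suffix array, because no suffix fits strictly between `c·X` and `c·Y` when none fits between
`X` and `Y`. Hence `LF (i - 1) + 1 = LF i`, and the common prefix grows by exactly `c`:
`LCP[LF i] = LCP[i] + 1`. Iterating this along `LF` until the first run head is met gives the
identity.
-/

open Function

theorem sufx_eq_cons {T : List ℕ} {k : ℕ} (hk : 1 ≤ k) (hkT : k ≤ T.length) :
    sufx T k = idx T k :: sufx T (k + 1) := by
  have hlt : k - 1 < T.length := by omega
  rw [sufx, sufx, idx, show k + 1 - 1 = k - 1 + 1 by omega, List.drop_eq_getElem_cons hlt,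
    List.getD_eq_getElem _ _ hlt]

@[simp]
theorem sufx_length_add_one (T : List ℕ) : sufx T (T.length + 1) = [] := by
  simp [sufx]

@[simp]
theorem lcpLen_cons_cons (a : ℕ) (l m : List ℕ) :
    lcpLen (a :: l) (a :: m) = lcpLen l m + 1 := by
  simp [lcpLen]

theorem List.lt_and_lt_of_cons_lt_lt_cons {α : Type*} [LinearOrder α] {c d : α}
    {l m l' : List α} (h₁ : c :: l < d :: m) (h₂ : d :: m < c :: l') : l < m ∧ m < l' := by
  rw [List.cons_lt_cons_iff] at h₁ h₂
  rcases h₁ with h₁ | ⟨rfl, h₁⟩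
  · rcases h₂ with h₂ | ⟨rfl, -⟩
    · exact absurd (h₁.trans h₂) (lt_irrefl c)
    · exact absurd h₁ (lt_irrefl d)
  · rcases h₂ with h₂ | ⟨-, h₂⟩
    · exact absurd h₂ (lt_irrefl c)
    · exact ⟨h₁, h₂⟩

theorem iterate_eq_add_of_forall_notMem {α : Type*} {f : α → α} {g : α → ℕ} {D S : Set α}
    (hf : Set.MapsTo f D D) (hstep : ∀ x ∈ D, x ∉ S → g (f x) = g x + 1) :
    ∀ {d : ℕ} {x : α}, x ∈ D → (∀ k < d, f^[k] x ∉ S) → g (f^[d] x) = g x + d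
  | 0, _, _, _ => rfl
  | d + 1, x, hx, hS => by
    have hfx : g (f x) = g x + 1 := hstep x hx (hS 0 d.succ_pos)
    rw [iterate_succ_apply, iterate_eq_add_of_forall_notMem hf hstep (hf hx)
      (fun k hk => hS (k + 1) (by omega)), hfx]
    omega

structure IsSuffixArray (T : List ℕ) (SA : ℕ → ℕ) : Prop where
  mapsTo : Set.MapsTo SA (Set.Icc 1 T.length) (Set.Icc 1 T.length)
  surjOn : Set.SurjOn SA (Set.Icc 1 T.length) (Set.Icc 1 T.length)
  strictMonoOn : StrictMonoOn (fun i => sufx T (SA i)) (Set.Icc 1 T.length)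

namespace IsSuffixArray

variable {T : List ℕ} {SA : ℕ → ℕ}

theorem sufx_lt_sufx_iff (hSA : IsSuffixArray T SA) {i j : ℕ} (hi : i ∈ Set.Icc 1 T.length)
    (hj : j ∈ Set.Icc 1 T.length) : sufx T (SA i) < sufx T (SA j) ↔ i < j :=
  hSA.strictMonoOn.lt_iff_lt hi hj

theorem not_lt_sufx_lt (hSA : IsSuffixArray T SA) {a m : ℕ} (ha : a ∈ Set.Icc 1 T.length)
    (ha' : a + 1 ∈ Set.Icc 1 T.length) (hm : m ∈ Set.Icc 1 (T.length + 1)) :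
    ¬ (sufx T (SA a) < sufx T m ∧ sufx T m < sufx T (SA (a + 1))) := by
  rintro ⟨h₁, h₂⟩
  rcases (show m ≤ T.length ∨ m = T.length + 1 by grind) with hmT | rfl
  · obtain ⟨k, hk, rfl⟩ := hSA.surjOn ⟨hm.1, hmT⟩
    rw [hSA.sufx_lt_sufx_iff ha hk] at h₁
    rw [hSA.sufx_lt_sufx_iff hk ha'] at h₂
    omega
  · rw [sufx_length_add_one] at h₁
    exact List.not_lt_nil _ h₁

theorem eq_succ_of_sufx_eq_cons (hSA : IsSuffixArray T SA) {a p q c : ℕ}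
    (ha : a ∈ Set.Icc 1 T.length) (ha' : a + 1 ∈ Set.Icc 1 T.length)
    (hp : p ∈ Set.Icc 1 T.length) (hq : q ∈ Set.Icc 1 T.length)
    (hpa : sufx T (SA p) = c :: sufx T (SA a)) (hqa : sufx T (SA q) = c :: sufx T (SA (a + 1))) :
    q = p + 1 := by
  have hpq : p < q := by
    rw [← hSA.sufx_lt_sufx_iff hp hq, hpa, hqa, List.cons_lt_cons_iff]
    exact Or.inr ⟨rfl, (hSA.sufx_lt_sufx_iff ha ha').2 a.lt_succ_self⟩
  by_contra hne
  have hj : p + 1 ∈ Set.Icc 1 T.length := ⟨by omega, by grind⟩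
  have hSAj := hSA.mapsTo hj
  have h₁ := (hSA.sufx_lt_sufx_iff hp hj).2 p.lt_succ_self
  have h₂ := (hSA.sufx_lt_sufx_iff hj hq).2 (by omega)
  rw [hpa, sufx_eq_cons hSAj.1 hSAj.2] at h₁
  rw [hqa, sufx_eq_cons hSAj.1 hSAj.2] at h₂
  exact hSA.not_lt_sufx_lt ha ha' ⟨by omega, by grind⟩
    (List.lt_and_lt_of_cons_lt_lt_cons h₁ h₂)

end IsSuffixArray

structure IsLF (T : List ℕ) (SA LF : ℕ → ℕ) : Prop where
  mapsTo : Set.MapsTo LF (Set.Icc 1 T.length) (Set.Icc 1 T.length)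
  SA_LF : ∀ i ∈ Set.Icc 1 T.length, SA i ≠ 1 → SA (LF i) = SA i - 1
  SA_LF_of_SA_eq_one : ∀ i ∈ Set.Icc 1 T.length, SA i = 1 → SA (LF i) = T.length

namespace IsLF

variable {T : List ℕ} {SA LF L : ℕ → ℕ}

theorem sufx_SA_LF (hSA : IsSuffixArray T SA) (hLF : IsLF T SA LF)
    (hL : ∀ i ∈ Set.Icc 1 T.length, L i = idx T (SA (LF i))) {i : ℕ}
    (hi : i ∈ Set.Icc 1 T.length) (hi₁ : SA i ≠ 1) :
    sufx T (SA (LF i)) = L i :: sufx T (SA i) := by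
  have hSAi := hSA.mapsTo hi
  rw [hL i hi, hLF.SA_LF i hi hi₁, sufx_eq_cons (by grind) (by grind),
    Nat.sub_add_cancel hSAi.1]

theorem SA_ne_one_of_bwt_eq (hSA : IsSuffixArray T SA) (hLF : IsLF T SA LF)
    (hL : ∀ i ∈ Set.Icc 1 T.length, L i = idx T (SA (LF i)))
    (hdollar : ∀ k ∈ Set.Icc 1 (T.length - 1), idx T k ≠ idx T T.length) {i j : ℕ}
    (hi : i ∈ Set.Icc 1 T.length) (hj : j ∈ Set.Icc 1 T.length) (hij : i ≠ j)
    (hLij : L i = L j) : SA i ≠ 1 := by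
  intro hi₁
  have hj₁ : SA j ≠ 1 := fun hj₁ =>
    hij (hSA.strictMonoOn.injOn hi hj (congrArg (sufx T) (hi₁.trans hj₁.symm)))
  have hSAj := hSA.mapsTo hj
  apply hdollar (SA j - 1) ⟨by grind, by grind⟩
  rw [← hLF.SA_LF j hj hj₁, ← hL j hj, ← hLij, hL i hi, hLF.SA_LF_of_SA_eq_one i hi hi₁]

theorem sufx_SA_LF_of_bwt_eq (hSA : IsSuffixArray T SA) (hLF : IsLF T SA LF)
    (hL : ∀ i ∈ Set.Icc 1 T.length, L i = idx T (SA (LF i)))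
    (hdollar : ∀ k ∈ Set.Icc 1 (T.length - 1), idx T k ≠ idx T T.length) {a : ℕ}
    (ha : a ∈ Set.Icc 1 T.length) (ha' : a + 1 ∈ Set.Icc 1 T.length) (hrun : L (a + 1) = L a) :
    sufx T (SA (LF a)) = L a :: sufx T (SA a) ∧
      sufx T (SA (LF (a + 1))) = L a :: sufx T (SA (a + 1)) :=
  ⟨sufx_SA_LF hSA hLF hL ha
      (SA_ne_one_of_bwt_eq hSA hLF hL hdollar ha ha' (by omega) hrun.symm),
    hrun ▸ sufx_SA_LF hSA hLF hL ha'
      (SA_ne_one_of_bwt_eq hSA hLF hL hdollar ha' ha (by omega) hrun)⟩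

theorem LF_succ_of_bwt_eq (hSA : IsSuffixArray T SA) (hLF : IsLF T SA LF)
    (hL : ∀ i ∈ Set.Icc 1 T.length, L i = idx T (SA (LF i)))
    (hdollar : ∀ k ∈ Set.Icc 1 (T.length - 1), idx T k ≠ idx T T.length) {a : ℕ}
    (ha : a ∈ Set.Icc 1 T.length) (ha' : a + 1 ∈ Set.Icc 1 T.length) (hrun : L (a + 1) = L a) :
    LF (a + 1) = LF a + 1 :=
  have hsufx := sufx_SA_LF_of_bwt_eq hSA hLF hL hdollar ha ha' hrun
  hSA.eq_succ_of_sufx_eq_cons ha ha' (hLF.mapsTo ha) (hLF.mapsTo ha') hsufx.1 hsufx.2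

theorem lcp_LF_succ_of_bwt_eq (hSA : IsSuffixArray T SA) (hLF : IsLF T SA LF)
    (hL : ∀ i ∈ Set.Icc 1 T.length, L i = idx T (SA (LF i)))
    (hdollar : ∀ k ∈ Set.Icc 1 (T.length - 1), idx T k ≠ idx T T.length) {LCP : ℕ → ℕ}
    (hLCP : ∀ i ∈ Set.Icc 2 T.length, LCP i = lcpLen (sufx T (SA (i - 1))) (sufx T (SA i)))
    {a : ℕ} (ha : a ∈ Set.Icc 1 T.length) (ha' : a + 1 ∈ Set.Icc 1 T.length)
    (hrun : L (a + 1) = L a) :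
    LCP (LF (a + 1)) = LCP (a + 1) + 1 := by
  have hsucc := LF_succ_of_bwt_eq hSA hLF hL hdollar ha ha' hrun
  obtain ⟨hsufx, hsufx'⟩ := sufx_SA_LF_of_bwt_eq hSA hLF hL hdollar ha ha' hrun
  rw [hLCP (LF (a + 1)) ⟨hsucc ▸ Nat.succ_le_succ (hLF.mapsTo ha).1, (hLF.mapsTo ha').2⟩,
    hLCP (a + 1) ⟨Nat.succ_le_succ ha.1, ha'.2⟩, hsucc, Nat.add_sub_cancel, Nat.add_sub_cancel,
    ← hsucc, hsufx, hsufx', lcpLen_cons_cons]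

end IsLF

theorem ne_one_and_bwt_eq_of_notMem_SstartSet {n i : ℕ} {L : ℕ → ℕ} (hi : i ∈ Set.Icc 1 n)
    (hS : i ∉ SstartSet n L) : i ≠ 1 ∧ L i = L (i - 1) := by
  simp only [SstartSet, Finset.mem_filter, Finset.mem_Icc, not_and, not_or, not_not] at hS
  exact hS hi

theorem stmt7_general
    (n : ℕ) (T : List ℕ)
    (hlen : T.length = n)
    (hdollar : ∀ i ∈ Finset.Icc 1 (n - 1), idx T i ≠ idx T n)
    (SA : ℕ → ℕ)
    (hSA_mem : ∀ i ∈ Finset.Icc 1 n, SA i ∈ Finset.Icc 1 n)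
    (hSA_surj : ∀ j ∈ Finset.Icc 1 n, ∃ i ∈ Finset.Icc 1 n, SA i = j)
    (hSA_sorted : ∀ i j, i ∈ Finset.Icc 1 n → j ∈ Finset.Icc 1 n → i < j →
      List.Lex (· < ·) (sufx T (SA i)) (sufx T (SA j)))
    (LF : ℕ → ℕ)
    (hLF_mem : ∀ i ∈ Finset.Icc 1 n, LF i ∈ Finset.Icc 1 n)
    (hLF : ∀ i ∈ Finset.Icc 1 n, SA i ≠ 1 → SA (LF i) = SA i - 1)
    (hLF1 : ∀ i ∈ Finset.Icc 1 n, SA i = 1 → SA (LF i) = n)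
    (L : ℕ → ℕ)
    (hL : ∀ i ∈ Finset.Icc 1 n, L i = idx T (SA (LF i)))
    (LCP : ℕ → ℕ)
    (hLCP : ∀ i ∈ Finset.Icc 2 n, LCP i = lcpLen (sufx T (SA (i - 1))) (sufx T (SA i)))
    (dist : ℕ → ℕ)
    (hdist_min : ∀ i ∈ Finset.Icc 1 n, ∀ x : ℕ, LF^[x] i ∈ SstartSet n L → dist i ≤ x)
 :
    ∀ i ∈ Finset.Icc 1 n, (LCP i : ℤ) = (LCP (LF^[dist i] i) : ℤ) - (dist i : ℤ) := by
  subst hlen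
  simp only [Finset.mem_Icc] at *
  have hSA : IsSuffixArray T SA :=
    ⟨hSA_mem, hSA_surj, fun i hi j hj => hSA_sorted i j hi hj⟩
  have hLFa : IsLF T SA LF := ⟨hLF_mem, hLF, hLF1⟩
  have hstep : ∀ i ∈ Set.Icc 1 T.length, i ∉ (SstartSet T.length L : Set ℕ) →
      LCP (LF i) = LCP i + 1 := by
    intro i hi hS
    obtain ⟨hi₁, hrun⟩ := ne_one_and_bwt_eq_of_notMem_SstartSet hi hS
    obtain ⟨a, rfl⟩ : ∃ a, i = a + 1 := ⟨i - 1, by grind⟩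
    exact hLFa.lcp_LF_succ_of_bwt_eq hSA hL hdollar hLCP ⟨by grind, by grind⟩ hi hrun
  intro i hi
  have hd := iterate_eq_add_of_forall_notMem hLFa.mapsTo hstep hi
    (fun k hk hS => (hdist_min i hi k hS).not_gt hk)
  omega

theorem stmt7
    (σ n : ℕ) (T : List ℕ)
    (hn : 2 ≤ n) (hlen : T.length = n)
    (halpha : ∀ c ∈ T, c ∈ Finset.Icc 1 σ)
    (hocc : ∀ c ∈ Finset.Icc 1 σ, c ∈ T)
    (hdollar : ∀ i ∈ Finset.Icc 1 (n - 1), idx T i ≠ idx T n)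
    (SA : ℕ → ℕ)
    (hSA_mem : ∀ i ∈ Finset.Icc 1 n, SA i ∈ Finset.Icc 1 n)
    (hSA_surj : ∀ j ∈ Finset.Icc 1 n, ∃ i ∈ Finset.Icc 1 n, SA i = j)
    (hSA_sorted : ∀ i j, i ∈ Finset.Icc 1 n → j ∈ Finset.Icc 1 n → i < j →
      List.Lex (· < ·) (sufx T (SA i)) (sufx T (SA j)))
    (LF : ℕ → ℕ)
    (hLF_mem : ∀ i ∈ Finset.Icc 1 n, LF i ∈ Finset.Icc 1 n)
    (hLF : ∀ i ∈ Finset.Icc 1 n, SA i ≠ 1 → SA (LF i) = SA i - 1)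
    (hLF1 : ∀ i ∈ Finset.Icc 1 n, SA i = 1 → SA (LF i) = n)
    (L : ℕ → ℕ)
    (hL : ∀ i ∈ Finset.Icc 1 n, L i = idx T (SA (LF i)))
    (LCP : ℕ → ℕ)
    (hLCP1 : LCP 1 = 0)
    (hLCP : ∀ i ∈ Finset.Icc 2 n, LCP i = lcpLen (sufx T (SA (i - 1))) (sufx T (SA i)))
    (dist : ℕ → ℕ)
    (hdist_mem : ∀ i ∈ Finset.Icc 1 n, LF^[dist i] i ∈ SstartSet n L)
    (hdist_min : ∀ i ∈ Finset.Icc 1 n, ∀ x : ℕ, LF^[x] i ∈ SstartSet n L → dist i ≤ x)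
 :
    ∀ i ∈ Finset.Icc 1 n, (LCP i : ℤ) = (LCP (LF^[dist i] i) : ℤ) - (dist i : ℤ) :=
  stmt7_general n T hlen hdollar SA hSA_mem hSA_surj hSA_sorted LF hLF_mem hLF hLF1 L hL LCP hLCP
    dist hdist_min
end

section
/- For every integer t ≥ 0 and all distinct indices i, j ∈ P_t, it holds that LF_{dist(i)}(i) ≠ LF_{dist(j)}(j). -/
/-!
Let `i ≠ j` both have LCP value `t`, and say `dist i ≤ dist j`. Inside a run of the BWT, LF maps
consecutive positions to consecutive positions, and both suffixes gain the same first character,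
so one LF step raises the LCP value by exactly one. Since LF is a permutation, the equality
`LF^[dist i] i = LF^[dist j] j` forces `LF^[k] j = i` for `k = dist j - dist i`, and the first `k`
iterates of `j` are not run starts; hence `t = LCP i = LCP j + k = t + k`, so `k = 0` and `i = j`.
-/

open Finset

theorem sufx_eq_idx_cons {T : List ℕ} {p : ℕ} (h1 : 1 ≤ p) (h2 : p ≤ T.length) :
    sufx T p = idx T p :: sufx T (p + 1) := by
  have hp : p - 1 < T.length := by omega
  rw [sufx, List.drop_eq_getElem_cons hp, idx, List.getD_eq_getElem?_getD,
    List.getElem?_eq_getElem hp, Option.getD_some, sufx, Nat.sub_add_cancel h1,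
    Nat.add_sub_cancel]

theorem mem_Icc_one_and_sub_one_mem_Icc_one {m n : ℕ} (hm : m ∈ Icc 2 n) :
    m ∈ Icc 1 n ∧ m - 1 ∈ Icc 1 n := by
  simp only [mem_Icc] at hm ⊢
  omega

theorem List.exists_eq_cons_of_cons_lt_of_lt_cons {α : Type*} [Preorder α] {a : α}
    {X W Y : List α} (h₁ : a :: X < W) (h₂ : W < a :: Y) : ∃ Z, W = a :: Z ∧ X < Z ∧ Z < Y := by
  obtain _ | ⟨b, Z⟩ := W
  · exact absurd h₁ (List.not_lt_nil _)
  rw [List.cons_lt_cons_iff] at h₁ h₂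
  rcases h₁ with hab | ⟨rfl, hXZ⟩
  · rcases h₂ with hba | ⟨rfl, -⟩
    · exact absurd (hab.trans hba) (lt_irrefl a)
    · exact absurd hab (lt_irrefl b)
  · rcases h₂ with hba | ⟨-, hZY⟩
    · exact absurd hba (lt_irrefl a)
    · exact ⟨Z, rfl, hXZ, hZY⟩

structure IsSuffixArray_s8 (n : ℕ) (T : List ℕ) (SA : ℕ → ℕ) : Prop where
  mapsTo : Set.MapsTo SA (Icc 1 n) (Icc 1 n)
  surj : ∀ j ∈ Icc 1 n, ∃ i ∈ Icc 1 n, SA i = j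
  sorted : StrictMonoOn (fun i => sufx T (SA i)) (Icc 1 n)

structure IsLFMapping (n : ℕ) (SA LF : ℕ → ℕ) : Prop where
  mapsTo : Set.MapsTo LF (Icc 1 n) (Icc 1 n)
  sa_pred : ∀ i ∈ Icc 1 n, SA i ≠ 1 → SA (LF i) = SA i - 1
  sa_wrap : ∀ i ∈ Icc 1 n, SA i = 1 → SA (LF i) = n

section SuffixArray

variable {n : ℕ} {T : List ℕ} {SA LF L : ℕ → ℕ}

theorem IsSuffixArray_s8.sufx_lt_sufx (hSA : IsSuffixArray_s8 n T SA) {i j : ℕ} (hi : i ∈ Icc 1 n)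
    (hj : j ∈ Icc 1 n) (hij : i < j) : sufx T (SA i) < sufx T (SA j) :=
  hSA.sorted hi hj hij

theorem IsSuffixArray_s8.sufx_lt_sufx_iff (hSA : IsSuffixArray_s8 n T SA) {i j : ℕ}
    (hi : i ∈ Icc 1 n) (hj : j ∈ Icc 1 n) : sufx T (SA i) < sufx T (SA j) ↔ i < j :=
  hSA.sorted.lt_iff_lt hi hj

theorem IsSuffixArray_s8.injOn (hSA : IsSuffixArray_s8 n T SA) : Set.InjOn SA (Icc 1 n) :=
  fun _ hi _ hj h => hSA.sorted.injOn hi hj (by simp only [h])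

/-- A suffix lying between two suffixes that start with `c` is `c` followed by a suffix lying
between their tails. -/
theorem IsSuffixArray_s8.exists_between_of_cons_lt_of_lt_cons (hSA : IsSuffixArray_s8 n T SA)
    (hT : T.length = n) {a b p c : ℕ} (ha : a ∈ Icc 1 n) (hb : b ∈ Icc 1 n) (hp : p ∈ Icc 1 n)
    (h₁ : c :: sufx T (SA a) < sufx T (SA p)) (h₂ : sufx T (SA p) < c :: sufx T (SA b)) :
    ∃ q ∈ Icc 1 n, a < q ∧ q < b := by
  obtain ⟨Z, hZ, haZ, hZb⟩ := List.exists_eq_cons_of_cons_lt_of_lt_cons h₁ h₂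
  have hSAp := mem_Icc.1 (hSA.mapsTo hp)
  have hZ_eq : Z = sufx T (SA p + 1) :=
    (List.cons.inj (hZ.symm.trans (sufx_eq_idx_cons hSAp.1 (hT ▸ hSAp.2)))).2
  have hSAp_lt : SA p < n := by
    by_contra! hge
    have hnil : Z = [] := by
      rw [hZ_eq, sufx, List.drop_eq_nil_iff]
      omega
    exact List.not_lt_nil _ (hnil ▸ haZ)
  obtain ⟨q, hq, hSAq⟩ := hSA.surj (SA p + 1) (mem_Icc.2 ⟨by omega, by omega⟩)
  rw [hZ_eq, ← hSAq] at haZ hZb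
  exact ⟨q, hq, (hSA.sufx_lt_sufx_iff ha hq).1 haZ, (hSA.sufx_lt_sufx_iff hq hb).1 hZb⟩

theorem IsLFMapping.injOn (hLF : IsLFMapping n SA LF) (hSA : IsSuffixArray_s8 n T SA) :
    Set.InjOn LF (Icc 1 n) := by
  intro i hi j hj h
  apply hSA.injOn hi hj
  have hSAi := mem_Icc.1 (hSA.mapsTo hi)
  have hSAj := mem_Icc.1 (hSA.mapsTo hj)
  have hLFij : SA (LF i) = SA (LF j) := congrArg SA h
  by_cases h1 : SA i = 1 <;> by_cases h2 : SA j = 1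
  · rw [h1, h2]
  · have := hLF.sa_wrap i hi h1; have := hLF.sa_pred j hj h2; omega
  · have := hLF.sa_pred i hi h1; have := hLF.sa_wrap j hj h2; omega
  · have := hLF.sa_pred i hi h1; have := hLF.sa_pred j hj h2; omega

theorem two_le_and_eq_of_notMem_SstartSet {m : ℕ} (hm : m ∈ Icc 1 n)
    (hns : m ∉ SstartSet n L) : 2 ≤ m ∧ L m = L (m - 1) := by
  simp only [SstartSet, mem_filter, not_and, not_or, not_not] at hns
  obtain ⟨hm1, hL⟩ := hns hm
  exact ⟨by have := (mem_Icc.1 hm).1; omega, hL⟩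

end SuffixArray

structure IsBWT (n : ℕ) (T : List ℕ) (SA LF L : ℕ → ℕ) : Prop where
  length_eq : T.length = n
  dollar : ∀ i ∈ Icc 1 (n - 1), idx T i ≠ idx T n
  suffixArray : IsSuffixArray_s8 n T SA
  lf : IsLFMapping n SA LF
  bwt_eq : ∀ i ∈ Icc 1 n, L i = idx T (SA (LF i))

namespace IsBWT

variable {n : ℕ} {T : List ℕ} {SA LF L : ℕ → ℕ}

theorem sufx_sa_LF_eq_cons (h : IsBWT n T SA LF L) {i : ℕ} (hi : i ∈ Icc 1 n) (h1 : SA i ≠ 1) :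
    sufx T (SA (LF i)) = L i :: sufx T (SA i) := by
  have hSAi := mem_Icc.1 (h.suffixArray.mapsTo hi)
  rw [h.bwt_eq i hi, h.lf.sa_pred i hi h1,
    sufx_eq_idx_cons (by omega) (by rw [h.length_eq]; omega), Nat.sub_add_cancel (by omega)]

theorem eq_dollar_iff (h : IsBWT n T SA LF L) {i : ℕ} (hi : i ∈ Icc 1 n) :
    L i = idx T n ↔ SA i = 1 := by
  rw [h.bwt_eq i hi]
  refine ⟨fun hc => ?_, fun h1 => by rw [h.lf.sa_wrap i hi h1]⟩
  by_contra h1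
  have hSAi := mem_Icc.1 (h.suffixArray.mapsTo hi)
  exact h.dollar _ (mem_Icc.2 (by rw [h.lf.sa_pred i hi h1]; omega)) hc

theorem sa_ne_one_of_eq_pred (h : IsBWT n T SA LF L) {m : ℕ} (hm : m ∈ Icc 2 n)
    (hLm : L m = L (m - 1)) : SA m ≠ 1 ∧ SA (m - 1) ≠ 1 := by
  obtain ⟨hmI, hm1I⟩ := mem_Icc_one_and_sub_one_mem_Icc_one hm
  have hne : SA m ≠ SA (m - 1) := fun he => by
    have := h.suffixArray.injOn hmI hm1I he
    have := (mem_Icc.1 hm).1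
    omega
  have key : SA m = 1 ↔ SA (m - 1) = 1 := by
    rw [← h.eq_dollar_iff hmI, ← h.eq_dollar_iff hm1I, hLm]
  exact ⟨fun h1 => hne (h1.trans (key.1 h1).symm), fun h1 => hne ((key.2 h1).trans h1.symm)⟩

theorem LF_eq_LF_pred_add_one (h : IsBWT n T SA LF L) {m : ℕ} (hm : m ∈ Icc 2 n)
    (hLm : L m = L (m - 1)) : LF m = LF (m - 1) + 1 := by
  obtain ⟨h1, h1'⟩ := h.sa_ne_one_of_eq_pred hm hLm
  obtain ⟨hmI, hm1I⟩ := mem_Icc_one_and_sub_one_mem_Icc_one hm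
  have hSA := h.suffixArray
  have hd := h.sufx_sa_LF_eq_cons hmI h1
  have hd' := h.sufx_sa_LF_eq_cons hm1I h1'
  rw [← hLm] at hd'
  have hlt : LF (m - 1) < LF m := by
    rw [← hSA.sufx_lt_sufx_iff (h.lf.mapsTo hm1I) (h.lf.mapsTo hmI), hd, hd',
      List.cons_lt_cons_self]
    exact hSA.sufx_lt_sufx hm1I hmI (by have := (mem_Icc.1 hm).1; omega)
  by_contra hne
  have hLFm := mem_Icc.1 (h.lf.mapsTo hmI)
  have hLFm1 := mem_Icc.1 (h.lf.mapsTo hm1I)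
  have hpI : LF (m - 1) + 1 ∈ Icc 1 n := mem_Icc.2 ⟨by omega, by omega⟩
  obtain ⟨q, -, hq₁, hq₂⟩ := hSA.exists_between_of_cons_lt_of_lt_cons h.length_eq hm1I hmI hpI
    (hd' ▸ hSA.sufx_lt_sufx (h.lf.mapsTo hm1I) hpI (by omega))
    (hd ▸ hSA.sufx_lt_sufx hpI (h.lf.mapsTo hmI) (by omega))
  omega

theorem LCP_LF_eq_add_one (h : IsBWT n T SA LF L) {LCP : ℕ → ℕ}
    (hLCP : ∀ i ∈ Icc 2 n, LCP i = lcpLen (sufx T (SA (i - 1))) (sufx T (SA i)))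
    {m : ℕ} (hm : m ∈ Icc 2 n) (hLm : L m = L (m - 1)) : LCP (LF m) = LCP m + 1 := by
  obtain ⟨h1, h1'⟩ := h.sa_ne_one_of_eq_pred hm hLm
  obtain ⟨hmI, hm1I⟩ := mem_Icc_one_and_sub_one_mem_Icc_one hm
  have hsucc := h.LF_eq_LF_pred_add_one hm hLm
  have hLFm := mem_Icc.1 (h.lf.mapsTo hmI)
  have hLFm1 := mem_Icc.1 (h.lf.mapsTo hm1I)
  rw [hLCP (LF m) (mem_Icc.2 ⟨by omega, hLFm.2⟩), hLCP m hm,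
    show LF m - 1 = LF (m - 1) by omega, h.sufx_sa_LF_eq_cons hmI h1,
    h.sufx_sa_LF_eq_cons hm1I h1', hLm, lcpLen, if_pos rfl]

theorem LCP_iterate_LF (h : IsBWT n T SA LF L) {LCP : ℕ → ℕ}
    (hLCP : ∀ i ∈ Icc 2 n, LCP i = lcpLen (sufx T (SA (i - 1))) (sufx T (SA i)))
    {j : ℕ} (hj : j ∈ Icc 1 n) {x : ℕ} (hrun : ∀ y < x, LF^[y] j ∉ SstartSet n L) :
    LCP (LF^[x] j) = LCP j + x := by
  induction x with
  | zero => rfl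
  | succ y ih =>
    have hyI := h.lf.mapsTo.iterate y hj
    obtain ⟨h2, hLy⟩ := two_le_and_eq_of_notMem_SstartSet hyI (hrun y (by omega))
    rw [Function.iterate_succ_apply',
      h.LCP_LF_eq_add_one hLCP (mem_Icc.2 ⟨h2, (mem_Icc.1 hyI).2⟩) hLy,
      ih fun z hz => hrun z (by omega), add_assoc]

end IsBWT

theorem stmt8_general
    (n : ℕ) (T : List ℕ)
    (hlen : T.length = n)
    (hdollar : ∀ i ∈ Finset.Icc 1 (n - 1), idx T i ≠ idx T n)
    (SA : ℕ → ℕ)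
    (hSA_mem : ∀ i ∈ Finset.Icc 1 n, SA i ∈ Finset.Icc 1 n)
    (hSA_surj : ∀ j ∈ Finset.Icc 1 n, ∃ i ∈ Finset.Icc 1 n, SA i = j)
    (hSA_sorted : ∀ i j, i ∈ Finset.Icc 1 n → j ∈ Finset.Icc 1 n → i < j →
      List.Lex (· < ·) (sufx T (SA i)) (sufx T (SA j)))
    (LF : ℕ → ℕ)
    (hLF_mem : ∀ i ∈ Finset.Icc 1 n, LF i ∈ Finset.Icc 1 n)
    (hLF : ∀ i ∈ Finset.Icc 1 n, SA i ≠ 1 → SA (LF i) = SA i - 1)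
    (hLF1 : ∀ i ∈ Finset.Icc 1 n, SA i = 1 → SA (LF i) = n)
    (L : ℕ → ℕ)
    (hL : ∀ i ∈ Finset.Icc 1 n, L i = idx T (SA (LF i)))
    (LCP : ℕ → ℕ)
    (hLCP : ∀ i ∈ Finset.Icc 2 n, LCP i = lcpLen (sufx T (SA (i - 1))) (sufx T (SA i)))
    (dist : ℕ → ℕ)
    (hdist_min : ∀ i ∈ Finset.Icc 1 n, ∀ x : ℕ, LF^[x] i ∈ SstartSet n L → dist i ≤ x)
 :
    ∀ t : ℕ, ∀ i ∈ Finset.Icc 2 n, ∀ j ∈ Finset.Icc 2 n,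
      LCP i = t → LCP j = t → i ≠ j → LF^[dist i] i ≠ LF^[dist j] j := by
  have hSA : IsSuffixArray_s8 n T SA := ⟨hSA_mem, hSA_surj, fun i hi j hj => hSA_sorted i j hi hj⟩
  have hLFmap : IsLFMapping n SA LF := ⟨hLF_mem, hLF, hLF1⟩
  have hBWT : IsBWT n T SA LF L := ⟨hlen, hdollar, hSA, hLFmap, hL⟩
  intro t i hi j hj hti htj hij heq
  wlog hle : dist i ≤ dist j generalizing i j
  · exact this j hj i hi htj hti hij.symm heq.symm (by omega)
  have hi1 := (mem_Icc_one_and_sub_one_mem_Icc_one hi).1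
  have hj1 := (mem_Icc_one_and_sub_one_mem_Icc_one hj).1
  obtain ⟨k, hk⟩ := Nat.exists_eq_add_of_le hle
  have hki : LF^[k] j = i := ((hLFmap.injOn hSA).iterate hLFmap.mapsTo (dist i))
    (hLFmap.mapsTo.iterate k hj1) hi1 (by rw [← Function.iterate_add_apply, ← hk, heq])
  have hLCPk := hBWT.LCP_iterate_LF hLCP hj1 (x := k)
    (fun y hy hS => by have := hdist_min j hj1 y hS; omega)
  rw [hki, hti, htj] at hLCPk
  obtain rfl : k = 0 := by omega
  exact hij hki.symm

theorem stmt8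
    (σ n : ℕ) (T : List ℕ)
    (hn : 2 ≤ n) (hlen : T.length = n)
    (halpha : ∀ c ∈ T, c ∈ Finset.Icc 1 σ)
    (hocc : ∀ c ∈ Finset.Icc 1 σ, c ∈ T)
    (hdollar : ∀ i ∈ Finset.Icc 1 (n - 1), idx T i ≠ idx T n)
    (SA : ℕ → ℕ)
    (hSA_mem : ∀ i ∈ Finset.Icc 1 n, SA i ∈ Finset.Icc 1 n)
    (hSA_surj : ∀ j ∈ Finset.Icc 1 n, ∃ i ∈ Finset.Icc 1 n, SA i = j)
    (hSA_sorted : ∀ i j, i ∈ Finset.Icc 1 n → j ∈ Finset.Icc 1 n → i < j →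
      List.Lex (· < ·) (sufx T (SA i)) (sufx T (SA j)))
    (LF : ℕ → ℕ)
    (hLF_mem : ∀ i ∈ Finset.Icc 1 n, LF i ∈ Finset.Icc 1 n)
    (hLF : ∀ i ∈ Finset.Icc 1 n, SA i ≠ 1 → SA (LF i) = SA i - 1)
    (hLF1 : ∀ i ∈ Finset.Icc 1 n, SA i = 1 → SA (LF i) = n)
    (L : ℕ → ℕ)
    (hL : ∀ i ∈ Finset.Icc 1 n, L i = idx T (SA (LF i)))
    (LCP : ℕ → ℕ)
    (hLCP1 : LCP 1 = 0)
    (hLCP : ∀ i ∈ Finset.Icc 2 n, LCP i = lcpLen (sufx T (SA (i - 1))) (sufx T (SA i)))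
    (dist : ℕ → ℕ)
    (hdist_mem : ∀ i ∈ Finset.Icc 1 n, LF^[dist i] i ∈ SstartSet n L)
    (hdist_min : ∀ i ∈ Finset.Icc 1 n, ∀ x : ℕ, LF^[x] i ∈ SstartSet n L → dist i ≤ x)
 :
    ∀ t : ℕ, ∀ i ∈ Finset.Icc 2 n, ∀ j ∈ Finset.Icc 2 n,
      LCP i = t → LCP j = t → i ≠ j → LF^[dist i] i ≠ LF^[dist j] j :=
  stmt8_general n T hlen hdollar SA hSA_mem hSA_surj hSA_sorted LF hLF_mem hLF hLF1 L hL LCP hLCP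
    dist hdist_min
end

section
/- For every integer t ≥ 0, |P_t| = |K'_t|, i.e., the number of positions with lcp-value t (excluding position 1) equals the number of non-last children of explicit suffix-tree nodes of depth t. -/
/-!
Send a position `i` with `LCP[i] = t` to the prefix of length `t + 1` of the suffix ranked
`i - 1`. Because `$` ends `T`, distinct suffixes are incomparable under the prefix order, so the
suffixes ranked `i - 1` and `i` share a prefix `P` of length `t` and continue with distinct
characters `c ≠ d`. Then `Pc` and `Pd` are children of `P`, so `P` is explicit; the interval of
`Pc` ends at `i - 1` while that of `P` contains `i`, so `Pc ∈ K'_t`, and `i` is recovered from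
`Pc` as one plus the right end of its interval. Conversely, if the interval of a child `Pc ∈ K'_t`
ends at `e`, then the suffix ranked `e + 1` still starts with `P` but not with `Pc`, so
`LCP[e + 1] = t`.
-/

theorem List.prefix_of_lex_of_lex {α : Type*} [Preorder α] :
    ∀ {P x y z : List α}, List.Lex (· < ·) x y → List.Lex (· < ·) y z →
      P <+: x → P <+: z → P <+: y
  | [], _, _, _, _, _, _, _ => List.nil_prefix
  | c :: P, _, y, _, hxy, hyz, ⟨x, hx⟩, ⟨z, hz⟩ => by
    subst hx hz
    cases hxy with
    | rel hcd =>
      cases hyz with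
      | rel hdc => exact absurd (hcd.trans hdc) (lt_irrefl c)
      | cons => exact absurd hcd (lt_irrefl c)
    | cons hxy =>
      cases hyz with
      | rel hcc => exact absurd hcc (lt_irrefl c)
      | cons hyz =>
        exact List.cons_prefix_cons.2 ⟨rfl, List.prefix_of_lex_of_lex hxy hyz
          (List.prefix_append P x) (List.prefix_append P z)⟩

theorem List.not_prefix_of_append_singleton_prefix {α : Type*} {P l : List α} {c d : α}
    (hd : P ++ [d] <+: l) (hcd : c ≠ d) : ¬ P ++ [c] <+: l := fun hc =>
  hcd <| by simpa using (List.prefix_of_prefix_length_le hc hd (by simp)).eq_of_length (by simp)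

theorem exists_append_singleton_prefix_of_not_prefix :
    ∀ {a b : List ℕ}, ¬ a <+: b → ¬ b <+: a →
      ∃ P c d, P.length = lcpLen a b ∧ c ≠ d ∧ P ++ [c] <+: a ∧ P ++ [d] <+: b
  | [], _, hab, _ => absurd List.nil_prefix hab
  | _ :: _, [], _, hba => absurd List.nil_prefix hba
  | x :: a, y :: b, hab, hba => by
    by_cases hxy : x = y
    · subst hxy
      obtain ⟨P, c, d, hP, hcd, hc, hd⟩ := exists_append_singleton_prefix_of_not_prefix
        (fun h => hab (List.cons_prefix_cons.2 ⟨rfl, h⟩))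
        (fun h => hba (List.cons_prefix_cons.2 ⟨rfl, h⟩))
      exact ⟨x :: P, c, d, by simp [lcpLen, hP], hcd, by simpa using hc, by simpa using hd⟩
    · exact ⟨[], x, y, by simp [lcpLen, hxy], hxy, by simp, by simp⟩

theorem lcpLen_eq_length_of_prefix :
    ∀ {P a b : List ℕ} {c : ℕ}, P ++ [c] <+: a → P <+: b → ¬ P ++ [c] <+: b →
      lcpLen a b = P.length
  | [], _, [], _, _, _, _ => by simp [lcpLen]
  | [], _, y :: _, c, ⟨a, ha⟩, _, hcb => by
    subst ha
    have hcy : c ≠ y := fun h => hcb (by simp [h])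
    simp [lcpLen, hcy]
  | x :: P, _, _, _, ⟨a, ha⟩, ⟨b, hb⟩, hcb => by
    subst ha hb
    have hrec := lcpLen_eq_length_of_prefix (List.prefix_append (P ++ [_]) a)
      (List.prefix_append P b) (fun h => hcb (by simpa using h))
    simpa [lcpLen] using hrec

section SuffixArray

variable {σ n t : ℕ} {T : List ℕ} {SA : ℕ → ℕ}

def SuffixesSorted (n : ℕ) (T : List ℕ) (SA : ℕ → ℕ) : Prop :=
  ∀ i j, i ∈ Finset.Icc 1 n → j ∈ Finset.Icc 1 n → i < j →
    List.Lex (· < ·) (sufx T (SA i)) (sufx T (SA j))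

def SuffixesPrefixFree (n : ℕ) (T : List ℕ) (SA : ℕ → ℕ) : Prop :=
  ∀ i ∈ Finset.Icc 1 n, ∀ j ∈ Finset.Icc 1 n, i ≠ j → ¬ sufx T (SA i) <+: sufx T (SA j)

theorem infix_of_prefix_sufx {X : List ℕ} {j : ℕ} (h : X <+: sufx T j) : X <:+: T :=
  h.isInfix.trans (List.drop_suffix _ _).isInfix

theorem exists_prefix_sufx_of_infix {X : List ℕ} (h : X <:+: T) (hX : X ≠ []) :
    ∃ j ∈ Finset.Icc 1 T.length, X <+: sufx T j := by
  obtain ⟨u, v, rfl⟩ := h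
  have hXlen : X.length ≠ 0 := by simpa using hX
  refine ⟨u.length + 1, ?_, ?_⟩
  · simp only [Finset.mem_Icc, List.length_append]
    omega
  · simp [sufx]

theorem eq_of_sufx_prefix_sufx (hlen : T.length = n)
    (hdollar : ∀ i ∈ Finset.Icc 1 (n - 1), idx T i ≠ idx T n) {j k : ℕ}
    (hj : j ∈ Finset.Icc 1 n) (hk : k ∈ Finset.Icc 1 n) (h : sufx T j <+: sufx T k) : j = k := by
  simp only [Finset.mem_Icc] at hj hk
  have hkj : k ≤ j := by
    have := h.length_le
    simp only [sufx, List.length_drop, hlen] at this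
    omega
  by_contra hne
  -- the final `$` of the shorter suffix would occur strictly inside `T`
  obtain ⟨r, hr⟩ := h
  have hlast : (sufx T k)[n - j]? = (sufx T j)[n - j]? := by
    rw [← hr, List.getElem?_append_left (by simp [sufx, hlen]; omega)]
  simp only [sufx, List.getElem?_drop] at hlast
  apply hdollar (k + n - j) (by simp only [Finset.mem_Icc]; omega)
  rw [idx, idx, List.getD_eq_getElem?_getD, List.getD_eq_getElem?_getD,
    show k + n - j - 1 = k - 1 + (n - j) by omega, show n - 1 = j - 1 + (n - j) by omega, hlast]

theorem suffixesPrefixFree_of_sorted (hlen : T.length = n)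
    (hdollar : ∀ i ∈ Finset.Icc 1 (n - 1), idx T i ≠ idx T n)
    (hSA_mem : ∀ i ∈ Finset.Icc 1 n, SA i ∈ Finset.Icc 1 n) (hsorted : SuffixesSorted n T SA) :
    SuffixesPrefixFree n T SA := by
  intro i hi j hj hij h
  have hSA := eq_of_sufx_prefix_sufx hlen hdollar (hSA_mem i hi) (hSA_mem j hj) h
  rcases hij.lt_or_gt with hlt | hlt
  · exact irrefl _ (hSA ▸ hsorted i j hi hj hlt)
  · exact irrefl _ (hSA ▸ hsorted j i hj hi hlt)

theorem childrenSet_finite (σ : ℕ) (T P : List ℕ) : (childrenSet σ T P).Finite :=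
  ((Set.finite_Icc 1 σ).image fun c => P ++ [c]).subset <| by
    rintro _ ⟨c, hc, rfl, -⟩
    exact ⟨c, by simpa using hc, rfl⟩

theorem append_singleton_mem_childrenSet (halpha : ∀ c ∈ T, c ∈ Finset.Icc 1 σ)
    {P : List ℕ} {c j : ℕ} (h : P ++ [c] <+: sufx T j) : P ++ [c] ∈ childrenSet σ T P :=
  ⟨c, halpha c ((infix_of_prefix_sufx h).subset (by simp)), rfl, infix_of_prefix_sufx h⟩

theorem two_le_ncard_childrenSet {P : List ℕ} {c d : ℕ} (hc : P ++ [c] ∈ childrenSet σ T P)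
    (hd : P ++ [d] ∈ childrenSet σ T P) (hcd : c ≠ d) : 2 ≤ (childrenSet σ T P).ncard :=
  (Set.one_lt_ncard (childrenSet_finite σ T P)).2 ⟨_, hc, _, hd, by simpa using hcd⟩

theorem isIntervalOf.prefix_iff {P : List ℕ} {b e i : ℕ} (h : isIntervalOf n T SA P b e)
    (hi : i ∈ Finset.Icc 1 n) : P <+: sufx T (SA i) ↔ b ≤ i ∧ i ≤ e := by
  simpa only [Finset.mem_Icc] using h.2.2 i hi

theorem isIntervalOf.right_eq {P : List ℕ} {b e i : ℕ} (h : isIntervalOf n T SA P b e)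
    (hi : i ∈ Finset.Icc 2 n) (hin : P <+: sufx T (SA (i - 1)))
    (hout : ¬ P <+: sufx T (SA i)) : e = i - 1 := by
  simp only [Finset.mem_Icc] at hi
  have h1 := (h.prefix_iff (i := i - 1) (by simp only [Finset.mem_Icc]; omega)).1 hin
  have h2 := (h.prefix_iff (i := i) (by simp only [Finset.mem_Icc]; omega)).not.1 hout
  omega

theorem exists_isIntervalOf (hsorted : SuffixesSorted n T SA) {P : List ℕ} {i : ℕ}
    (hi : i ∈ Finset.Icc 1 n) (hP : P <+: sufx T (SA i)) : ∃ b e, isIntervalOf n T SA P b e := by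
  classical
  set S := (Finset.Icc 1 n).filter fun j => P <+: sufx T (SA j)
  have hS : S.Nonempty := ⟨i, Finset.mem_filter.2 ⟨hi, hP⟩⟩
  have hb := Finset.mem_filter.1 (S.min'_mem hS)
  have he := Finset.mem_filter.1 (S.max'_mem hS)
  refine ⟨S.min' hS, S.max' hS, (Finset.mem_Icc.1 hb.1).1, (Finset.mem_Icc.1 he.1).2,
    fun j hj => ⟨fun hPj => ?_, fun hj' => ?_⟩⟩
  · have hjS : j ∈ S := Finset.mem_filter.2 ⟨hj, hPj⟩
    exact Finset.mem_Icc.2 ⟨S.min'_le j hjS, S.le_max' j hjS⟩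
  · obtain ⟨hbj, hje⟩ := Finset.mem_Icc.1 hj'
    rcases hbj.eq_or_lt with hbj | hbj
    · exact hbj ▸ hb.2
    rcases hje.eq_or_lt with hje | hje
    · exact hje ▸ he.2
    exact List.prefix_of_lex_of_lex (hsorted _ _ hb.1 hj hbj) (hsorted _ _ hj he.1 hje) hb.2 he.2

theorem exists_branch_of_lcpLen_eq (hfree : SuffixesPrefixFree n T SA) {i : ℕ}
    (hi : i ∈ Finset.Icc 2 n)
    (ht : lcpLen (sufx T (SA (i - 1))) (sufx T (SA i)) = t) :
    ∃ P c d, P.length = t ∧ c ≠ d ∧ (sufx T (SA (i - 1))).take (t + 1) = P ++ [c] ∧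
      P ++ [c] <+: sufx T (SA (i - 1)) ∧ P ++ [d] <+: sufx T (SA i) := by
  have hi1 : i - 1 ∈ Finset.Icc 1 n := by simp only [Finset.mem_Icc] at hi ⊢; omega
  have hi' : i ∈ Finset.Icc 1 n := by simp only [Finset.mem_Icc] at hi ⊢; omega
  have hne : i - 1 ≠ i := by simp only [Finset.mem_Icc] at hi; omega
  obtain ⟨P, c, d, hP, hcd, hc, hd⟩ := exists_append_singleton_prefix_of_not_prefix
    (hfree _ hi1 _ hi' hne) (hfree _ hi' _ hi1 hne.symm)
  refine ⟨P, c, d, hP.trans ht, hcd, ?_, hc, hd⟩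
  rw [List.prefix_iff_eq_take] at hc
  simpa [hP, ht] using hc.symm

theorem take_succ_mem_KpsetD (halpha : ∀ c ∈ T, c ∈ Finset.Icc 1 σ)
    (hfree : SuffixesPrefixFree n T SA) (hsorted : SuffixesSorted n T SA) {i : ℕ}
    (hi : i ∈ Finset.Icc 2 n) (ht : lcpLen (sufx T (SA (i - 1))) (sufx T (SA i)) = t) :
    (sufx T (SA (i - 1))).take (t + 1) ∈ KpsetD σ n t T SA := by
  have hi1 : i - 1 ∈ Finset.Icc 1 n := by simp only [Finset.mem_Icc] at hi ⊢; omega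
  have hi' : i ∈ Finset.Icc 1 n := by simp only [Finset.mem_Icc] at hi ⊢; omega
  obtain ⟨P, c, d, hP, hcd, hQ, hc, hd⟩ := exists_branch_of_lcpLen_eq hfree hi ht
  have hPc := append_singleton_mem_childrenSet halpha (σ := σ) hc
  have hPd := append_singleton_mem_childrenSet halpha (σ := σ) hd
  obtain ⟨bP, eP, hPint⟩ := exists_isIntervalOf hsorted hi1 ((List.prefix_append _ _).trans hc)
  obtain ⟨bQ, eQ, hQint⟩ := exists_isIntervalOf hsorted hi1 hc
  have heQ : eQ = i - 1 :=
    hQint.right_eq hi hc (List.not_prefix_of_append_singleton_prefix hd hcd)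
  have heP : i ≤ eP := ((hPint.prefix_iff hi').1 ((List.prefix_append _ _).trans hd)).2
  rw [hQ]
  refine ⟨P, ⟨infix_of_prefix_sufx ((List.prefix_append _ _).trans hc), hP,
    two_le_ncard_childrenSet hPc hPd hcd⟩, hPc, bP, eP, bQ, eQ, hPint, hQint, ?_⟩
  simp only [Finset.mem_Icc] at hi
  omega

theorem injOn_take_succ (hfree : SuffixesPrefixFree n T SA) (hsorted : SuffixesSorted n T SA) :
    Set.InjOn (fun i => (sufx T (SA (i - 1))).take (t + 1))
      {i | i ∈ Finset.Icc 2 n ∧ lcpLen (sufx T (SA (i - 1))) (sufx T (SA i)) = t} := by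
  have hright : ∀ i ∈ Finset.Icc 2 n, lcpLen (sufx T (SA (i - 1))) (sufx T (SA i)) = t →
      ∀ b e, isIntervalOf n T SA ((sufx T (SA (i - 1))).take (t + 1)) b e → e = i - 1 := by
    intro i hi ht b e h
    obtain ⟨P, c, d, -, hcd, hQ, hc, hd⟩ := exists_branch_of_lcpLen_eq hfree hi ht
    rw [hQ] at h
    exact h.right_eq hi hc (List.not_prefix_of_append_singleton_prefix hd hcd)
  rintro i ⟨hi, ht⟩ i' ⟨hi', ht'⟩ heq
  simp only at heq
  have hi1 : i - 1 ∈ Finset.Icc 1 n := by simp only [Finset.mem_Icc] at hi ⊢; omega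
  obtain ⟨b, e, h⟩ := exists_isIntervalOf hsorted hi1 (List.take_prefix (t + 1) _)
  have he := hright i hi ht b e h
  have he' := hright i' hi' ht' b e (heq ▸ h)
  simp only [Finset.mem_Icc] at hi hi'
  omega

theorem exists_take_succ_eq_of_mem_KpsetD (hlen : T.length = n)
    (hSA_surj : ∀ j ∈ Finset.Icc 1 n, ∃ i ∈ Finset.Icc 1 n, SA i = j) {Q : List ℕ}
    (hQ : Q ∈ KpsetD σ n t T SA) :
    ∃ i ∈ Finset.Icc 2 n, lcpLen (sufx T (SA (i - 1))) (sufx T (SA i)) = t ∧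
      (sufx T (SA (i - 1))).take (t + 1) = Q := by
  obtain ⟨P, ⟨-, hPlen, -⟩, ⟨c, -, rfl, hinf⟩, bP, eP, bQ, eQ, hPint, hQint, hne⟩ := hQ
  obtain ⟨j, hj, hQj⟩ := exists_prefix_sufx_of_infix hinf (by simp)
  obtain ⟨k, hk, rfl⟩ := hSA_surj j (hlen ▸ hj)
  have hkQ := (hQint.prefix_iff hk).1 hQj
  have heQ : eQ ∈ Finset.Icc 1 n := by
    have := hQint.1; have := hQint.2.1; simp only [Finset.mem_Icc]; omega
  have hQe := (hQint.prefix_iff heQ).2 ⟨hkQ.1.trans hkQ.2, le_rfl⟩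
  have hPe := (hPint.prefix_iff heQ).1 ((List.prefix_append _ _).trans hQe)
  have hi : eQ + 1 ∈ Finset.Icc 2 n := by
    have := hPint.2.1; simp only [Finset.mem_Icc] at heQ ⊢; omega
  have hi' : eQ + 1 ∈ Finset.Icc 1 n := by simp only [Finset.mem_Icc] at hi ⊢; omega
  have hPi := (hPint.prefix_iff hi').2 ⟨by omega, by omega⟩
  have hQi : ¬ P ++ [c] <+: sufx T (SA (eQ + 1)) := fun h => by
    have := (hQint.prefix_iff hi').1 h; omega
  refine ⟨eQ + 1, hi, ?_, ?_⟩
  · simpa [hPlen] using lcpLen_eq_length_of_prefix hQe hPi hQi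
  · rw [List.prefix_iff_eq_take] at hQe
    simpa [hPlen] using hQe.symm

end SuffixArray

theorem stmt10_general
    (σ n : ℕ) (T : List ℕ)
    (hlen : T.length = n)
    (halpha : ∀ c ∈ T, c ∈ Finset.Icc 1 σ)
    (hdollar : ∀ i ∈ Finset.Icc 1 (n - 1), idx T i ≠ idx T n)
    (SA : ℕ → ℕ)
    (hSA_mem : ∀ i ∈ Finset.Icc 1 n, SA i ∈ Finset.Icc 1 n)
    (hSA_surj : ∀ j ∈ Finset.Icc 1 n, ∃ i ∈ Finset.Icc 1 n, SA i = j)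
    (hSA_sorted : ∀ i j, i ∈ Finset.Icc 1 n → j ∈ Finset.Icc 1 n → i < j →
      List.Lex (· < ·) (sufx T (SA i)) (sufx T (SA j)))
    (LCP : ℕ → ℕ)
    (hLCP : ∀ i ∈ Finset.Icc 2 n, LCP i = lcpLen (sufx T (SA (i - 1))) (sufx T (SA i)))
 :
    ∀ t : ℕ, ((Finset.Icc 2 n).filter (fun i => LCP i = t)).card
      = (KpsetD σ n t T SA).ncard := by
  intro t
  have hfree := suffixesPrefixFree_of_sorted hlen hdollar hSA_mem hSA_sorted
  have hF : (((Finset.Icc 2 n).filter (fun i => LCP i = t) : Finset ℕ) : Set ℕ) =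
      {i | i ∈ Finset.Icc 2 n ∧ lcpLen (sufx T (SA (i - 1))) (sufx T (SA i)) = t} := by
    ext i
    simp only [Finset.coe_filter, Set.mem_ofPred_eq]
    exact and_congr_right fun hi => by rw [hLCP i hi]
  have himage : (fun i => (sufx T (SA (i - 1))).take (t + 1)) ''
      {i | i ∈ Finset.Icc 2 n ∧ lcpLen (sufx T (SA (i - 1))) (sufx T (SA i)) = t} =
      KpsetD σ n t T SA := by
    refine Set.Subset.antisymm ?_ fun Q hQ => ?_
    · rintro _ ⟨i, ⟨hi, ht⟩, rfl⟩
      exact take_succ_mem_KpsetD halpha hfree hSA_sorted hi ht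
    · obtain ⟨i, hi, ht, rfl⟩ := exists_take_succ_eq_of_mem_KpsetD hlen hSA_surj hQ
      exact ⟨i, ⟨hi, ht⟩, rfl⟩
  rw [← himage, (injOn_take_succ hfree hSA_sorted).ncard_image, ← hF, Set.ncard_coe_finset]

theorem stmt10
    (σ n : ℕ) (T : List ℕ)
    (hn : 2 ≤ n) (hlen : T.length = n)
    (halpha : ∀ c ∈ T, c ∈ Finset.Icc 1 σ)
    (hocc : ∀ c ∈ Finset.Icc 1 σ, c ∈ T)
    (hdollar : ∀ i ∈ Finset.Icc 1 (n - 1), idx T i ≠ idx T n)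
    (SA : ℕ → ℕ)
    (hSA_mem : ∀ i ∈ Finset.Icc 1 n, SA i ∈ Finset.Icc 1 n)
    (hSA_surj : ∀ j ∈ Finset.Icc 1 n, ∃ i ∈ Finset.Icc 1 n, SA i = j)
    (hSA_sorted : ∀ i j, i ∈ Finset.Icc 1 n → j ∈ Finset.Icc 1 n → i < j →
      List.Lex (· < ·) (sufx T (SA i)) (sufx T (SA j)))
    (LF : ℕ → ℕ)
    (hLF_mem : ∀ i ∈ Finset.Icc 1 n, LF i ∈ Finset.Icc 1 n)
    (hLF : ∀ i ∈ Finset.Icc 1 n, SA i ≠ 1 → SA (LF i) = SA i - 1)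
    (hLF1 : ∀ i ∈ Finset.Icc 1 n, SA i = 1 → SA (LF i) = n)
    (L : ℕ → ℕ)
    (hL : ∀ i ∈ Finset.Icc 1 n, L i = idx T (SA (LF i)))
    (LCP : ℕ → ℕ)
    (hLCP1 : LCP 1 = 0)
    (hLCP : ∀ i ∈ Finset.Icc 2 n, LCP i = lcpLen (sufx T (SA (i - 1))) (sufx T (SA i)))
 :
    ∀ t : ℕ, ((Finset.Icc 2 n).filter (fun i => LCP i = t)).card
      = (KpsetD σ n t T SA).ncard :=
  stmt10_general σ n T hlen halpha hdollar SA hSA_mem hSA_surj hSA_sorted LCP hLCP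
end

section
/- A substring P of T is a maximal repeat of T if and only if (i) the node u_P is explicit, i.e., |children(P)| ≥ 2, and (ii) rank(S_start, b) ≠ rank(S_start, e), where interval(P) = [b, e]. -/
/-! The occurrences of `P` are exactly the suffixes `SA[b..e]`. Hence `P` is left-maximal iff
the characters preceding these suffixes are not all equal; these characters are `L[b..e]`,
except that the suffix `T` itself gets the end marker `$`, which precedes no occurrence of a
nonempty pattern. So left-maximality means that `L` is not constant on `[b, e]`, i.e. that `b`
and `e` have different ranks in `S_start`. Right-maximality of a pattern with two occurrences
amounts to two distinct right extensions: no such occurrence can end at the unique `$`, so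
every occurrence is followed by a character. -/

theorem Finset.card_filter_lt_iff {α : Type*} {s : Finset α} {p : α → Prop} [DecidablePred p] :
    (s.filter p).card < s.card ↔ ∃ x ∈ s, ¬ p x := by
  rw [(card_filter_le s p).lt_iff_ne, Ne, card_filter_eq_iff]
  push Not
  rfl

theorem List.append_singleton_prefix_iff {α : Type*} {l₁ l₂ : List α} {a : α} :
    l₁ ++ [a] <+: l₂ ↔ l₁ <+: l₂ ∧ l₂[l₁.length]? = some a := by
  simp only [prefix_iff_getElem?, length_append, length_singleton]
  constructor
  · intro h
    refine ⟨fun i hi => ?_, by simpa using h l₁.length (by omega)⟩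
    simpa [getElem_append_left hi] using h i (by omega)
  · rintro ⟨h, ha⟩ i hi
    rcases Nat.lt_or_ge i l₁.length with hi' | hi'
    · simpa [getElem_append_left hi'] using h i hi'
    · obtain rfl : i = l₁.length := by omega
      simpa using ha

section Occurrences

variable {T P : List ℕ} {c j : ℕ}

theorem getElem?_sub_one_eq_some_iff (hj : 1 ≤ j) :
    T[j - 1]? = some c ↔ j ≤ T.length ∧ idx T j = c := by
  rw [idx, List.getD_eq_getElem?_getD, List.getElem?_eq_some_iff]
  constructor
  · rintro ⟨hlt, rfl⟩
    exact ⟨by omega, by simp [List.getElem?_eq_getElem hlt]⟩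
  · rintro ⟨hle, rfl⟩
    exact ⟨by omega, by simp [List.getElem?_eq_getElem (show j - 1 < T.length by omega)]⟩

theorem idx_mem (hj : 1 ≤ j) (hjT : j ≤ T.length) : idx T j ∈ T :=
  List.mem_of_getElem? ((getElem?_sub_one_eq_some_iff hj).2 ⟨hjT, rfl⟩)

theorem drop_sub_one_eq_idx_cons (hj : 1 ≤ j) (hjT : j ≤ T.length) :
    T.drop (j - 1) = idx T j :: T.drop j := by
  have h := (getElem?_sub_one_eq_some_iff hj).2 ⟨hjT, rfl⟩
  rw [List.getElem?_eq_some_iff] at h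
  obtain ⟨hlt, h⟩ := h
  rw [List.drop_eq_getElem_cons hlt, h, Nat.sub_add_cancel hj]

theorem mem_occF_iff :
    j ∈ OccF T P ↔ 1 ≤ j ∧ j + P.length ≤ T.length + 1 ∧ P <+: T.drop (j - 1) := by
  rw [OccF, Finset.mem_filter, Finset.mem_Icc]
  constructor
  · rintro ⟨⟨hj, hjT⟩, hpre⟩
    have := hpre.length_le
    rw [List.length_drop] at this
    exact ⟨hj, by omega, hpre⟩
  · rintro ⟨hj, hlen, hpre⟩
    exact ⟨⟨hj, by omega⟩, hpre⟩

theorem mem_occF_iff_of_ne_nil (hP : P ≠ []) :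
    j ∈ OccF T P ↔ 1 ≤ j ∧ P <+: T.drop (j - 1) := by
  refine mem_occF_iff.trans ⟨fun h => ⟨h.1, h.2.2⟩, fun ⟨hj, hpre⟩ => ⟨hj, ?_, hpre⟩⟩
  have := hpre.length_le
  rw [List.length_drop] at this
  have := List.length_pos_iff.2 hP
  omega

theorem isInfix_iff_occF_nonempty : P <:+: T ↔ (OccF T P).Nonempty := by
  constructor
  · rintro ⟨s, t, rfl⟩
    refine ⟨s.length + 1, mem_occF_iff.2 ⟨by omega, by simp; omega, ?_⟩⟩
    simp [List.drop_left']
  · rintro ⟨j, hj⟩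
    exact (mem_occF_iff.1 hj).2.2.isInfix.trans (List.drop_suffix _ _).isInfix

theorem idx_add_of_mem_occF (hj : j ∈ OccF T P) {k : ℕ} (hk : k < P.length) :
    idx T (j + k) = P[k] := by
  obtain ⟨hj1, -, hpre⟩ := mem_occF_iff.1 hj
  have h := List.prefix_iff_getElem?.1 hpre k hk
  rw [List.getElem?_drop, show j - 1 + k = j + k - 1 by omega,
    getElem?_sub_one_eq_some_iff (by omega)] at h
  exact h.2

theorem mem_occF_append_singleton :
    j ∈ OccF T (P ++ [c]) ↔
      j ∈ OccF T P ∧ j + P.length ≤ T.length ∧ idx T (j + P.length) = c := by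
  simp only [mem_occF_iff, List.append_singleton_prefix_iff, List.getElem?_drop,
    List.length_append, List.length_singleton]
  constructor
  · rintro ⟨hj, -, hpre, hc⟩
    rw [show j - 1 + P.length = j + P.length - 1 by omega,
      getElem?_sub_one_eq_some_iff (by omega)] at hc
    exact ⟨⟨hj, by omega, hpre⟩, hc⟩
  · rintro ⟨⟨hj, -, hpre⟩, hc⟩
    rw [show j - 1 + P.length = j + P.length - 1 by omega,
      getElem?_sub_one_eq_some_iff (by omega)]
    exact ⟨hj, by omega, hpre, hc⟩

theorem mem_occF_cons : j ∈ OccF T (c :: P) ↔ 1 ≤ j ∧ idx T j = c ∧ j + 1 ∈ OccF T P := by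
  simp only [mem_occF_iff, List.length_cons, Nat.add_sub_cancel]
  constructor
  · rintro ⟨hj, hlen, hpre⟩
    rw [drop_sub_one_eq_idx_cons hj (by omega), List.cons_prefix_cons] at hpre
    exact ⟨hj, hpre.1.symm, by omega, by omega, hpre.2⟩
  · rintro ⟨hj, rfl, -, hlen, hpre⟩
    rw [drop_sub_one_eq_idx_cons hj (by omega), List.cons_prefix_cons]
    exact ⟨hj, by omega, rfl, hpre⟩

theorem card_occF_append_singleton_lt_iff :
    (OccF T (P ++ [c])).card < (OccF T P).card ↔
      ∃ j ∈ OccF T P, ¬ (j + P.length ≤ T.length ∧ idx T (j + P.length) = c) := by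
  have h : OccF T (P ++ [c]) =
      (OccF T P).filter (fun j => j + P.length ≤ T.length ∧ idx T (j + P.length) = c) := by
    ext j
    rw [mem_occF_append_singleton, Finset.mem_filter]
  rw [h, Finset.card_filter_lt_iff]

theorem card_occF_cons_lt_iff :
    (OccF T (c :: P)).card < (OccF T P).card ↔
      ∃ j ∈ OccF T P, ¬ (2 ≤ j ∧ idx T (j - 1) = c) := by
  have h : (OccF T (c :: P)).image (· + 1) =
      (OccF T P).filter (fun j => 2 ≤ j ∧ idx T (j - 1) = c) := by
    ext j
    simp only [Finset.mem_image, Finset.mem_filter, mem_occF_cons]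
    constructor
    · rintro ⟨k, ⟨hk, rfl, hocc⟩, rfl⟩
      exact ⟨hocc, by omega, by simp⟩
    · rintro ⟨hocc, hj, rfl⟩
      exact ⟨j - 1, ⟨by omega, rfl, by rwa [Nat.sub_add_cancel (by omega)]⟩, by omega⟩
  rw [← Finset.card_image_of_injective _ (add_left_injective 1), h, Finset.card_filter_lt_iff]

end Occurrences

section RightExtensions

variable {σ : ℕ} {T P : List ℕ}

theorem ncard_childrenSet :
    (childrenSet σ T P).ncard = ((Finset.Icc 1 σ).filter (fun c => P ++ [c] <:+: T)).card := by
  have h : childrenSet σ T P =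
      ((Finset.Icc 1 σ).filter (fun c => P ++ [c] <:+: T)).image (P ++ [·]) := by
    ext Q
    simp only [childrenSet, Finset.coe_image, Finset.coe_filter, Set.mem_image,
      Set.mem_ofPred_eq]
    constructor
    · rintro ⟨c, hc, rfl, hinf⟩
      exact ⟨c, ⟨hc, hinf⟩, rfl⟩
    · rintro ⟨c, ⟨hc, hinf⟩, rfl⟩
      exact ⟨c, hc, rfl, hinf⟩
  rw [h, Set.ncard_coe_finset, Finset.card_image_of_injective _ fun a b h => by simpa using h]

theorem add_length_le_of_mem_occF
    (hdollar : ∀ i ∈ Finset.Icc 1 (T.length - 1), idx T i ≠ idx T T.length)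
    (hP : P ≠ []) (h2 : 2 ≤ (OccF T P).card) {j : ℕ} (hj : j ∈ OccF T P) :
    j + P.length ≤ T.length := by
  by_contra hend
  have hP1 : P.length - 1 < P.length := by have := List.length_pos_iff.2 hP; omega
  have hjend : j + (P.length - 1) = T.length := by have := (mem_occF_iff.1 hj).2.1; omega
  have huniq : ∀ j' ∈ OccF T P, j' = j := by
    intro j' hj'
    have hlast : idx T (j' + (P.length - 1)) = idx T T.length := by
      rw [← hjend, idx_add_of_mem_occF hj' hP1, idx_add_of_mem_occF hj hP1]
    obtain ⟨hj'1, hj'T, -⟩ := mem_occF_iff.1 hj'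
    by_contra hne
    exact hdollar _ (Finset.mem_Icc.2 ⟨by omega, by omega⟩) hlast
  have := Finset.card_le_one.2 fun a ha b hb => (huniq a ha).trans (huniq b hb).symm
  omega

theorem two_le_ncard_childrenSet_iff
    (halpha : ∀ c ∈ T, c ∈ Finset.Icc 1 σ)
    (hdollar : ∀ i ∈ Finset.Icc 1 (T.length - 1), idx T i ≠ idx T T.length)
    (hP : P ≠ []) :
    2 ≤ (childrenSet σ T P).ncard ↔
      2 ≤ (OccF T P).card ∧
        ∀ c ∈ Finset.Icc 1 σ, (OccF T (P ++ [c])).card < (OccF T P).card := by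
  simp only [ncard_childrenSet, card_occF_append_singleton_lt_iff]
  constructor
  · intro h
    obtain ⟨c₁, hc₁, c₂, hc₂, hne⟩ := Finset.one_lt_card.1 h
    simp only [Finset.mem_filter, isInfix_iff_occF_nonempty] at hc₁ hc₂
    obtain ⟨j₁, hj₁⟩ := hc₁.2
    obtain ⟨j₂, hj₂⟩ := hc₂.2
    rw [mem_occF_append_singleton] at hj₁ hj₂
    refine ⟨Finset.one_lt_card.2 ⟨j₁, hj₁.1, j₂, hj₂.1, ?_⟩, fun c _ => ?_⟩
    · rintro rfl
      exact hne (hj₁.2.2.symm.trans hj₂.2.2)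
    · by_cases hc : c = c₁
      · subst hc
        exact ⟨j₂, hj₂.1, fun h => hne (h.2.symm.trans hj₂.2.2)⟩
      · exact ⟨j₁, hj₁.1, fun h => hc (h.2.symm.trans hj₁.2.2)⟩
  · rintro ⟨h2, hlt⟩
    have hnext : ∀ j ∈ OccF T P,
        idx T (j + P.length) ∈ (Finset.Icc 1 σ).filter (fun c => P ++ [c] <:+: T) := by
      intro j hj
      have hjT := add_length_le_of_mem_occF hdollar hP h2 hj
      have hj1 := (mem_occF_iff.1 hj).1
      exact Finset.mem_filter.2 ⟨halpha _ (idx_mem (by omega) hjT),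
        isInfix_iff_occF_nonempty.2 ⟨j, mem_occF_append_singleton.2 ⟨hj, hjT, rfl⟩⟩⟩
    obtain ⟨j₀, hj₀⟩ := Finset.card_pos.1 (by omega : 0 < (OccF T P).card)
    obtain ⟨j₁, hj₁, hne⟩ := hlt _ (Finset.mem_filter.1 (hnext j₀ hj₀)).1
    exact Finset.one_lt_card.2 ⟨_, hnext j₀ hj₀, _, hnext j₁ hj₁,
      fun h => hne ⟨add_length_le_of_mem_occF hdollar hP h2 hj₁, h.symm⟩⟩

end RightExtensions

section SuffixArray

variable {σ n b e : ℕ} {T P : List ℕ} {SA LF L : ℕ → ℕ}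

theorem occF_eq_image_of_isIntervalOf
    (hSA_mem : ∀ i ∈ Finset.Icc 1 T.length, SA i ∈ Finset.Icc 1 T.length)
    (hSA_surj : ∀ j ∈ Finset.Icc 1 T.length, ∃ i ∈ Finset.Icc 1 T.length, SA i = j)
    (hP : P ≠ []) (hbe : isIntervalOf T.length T SA P b e) :
    OccF T P = (Finset.Icc b e).image SA := by
  obtain ⟨hb, he, hint⟩ := hbe
  ext j
  rw [Finset.mem_image]
  constructor
  · intro hj
    obtain ⟨hj1, hjT, hpre⟩ := mem_occF_iff.1 hj
    have := List.length_pos_iff.2 hP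
    obtain ⟨i, hi, rfl⟩ := hSA_surj j (Finset.mem_Icc.2 ⟨hj1, by omega⟩)
    exact ⟨i, (hint i hi).1 hpre, rfl⟩
  · rintro ⟨i, hi, rfl⟩
    have hi' : i ∈ Finset.Icc 1 T.length := Finset.Icc_subset_Icc hb he hi
    exact (mem_occF_iff_of_ne_nil hP).2
      ⟨(Finset.mem_Icc.1 (hSA_mem i hi')).1, (hint i hi').2 hi⟩

theorem bwt_eq_iff_of_ne_last
    (hSA_mem : ∀ i ∈ Finset.Icc 1 n, SA i ∈ Finset.Icc 1 n)
    (hLF : ∀ i ∈ Finset.Icc 1 n, SA i ≠ 1 → SA (LF i) = SA i - 1)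
    (hLF1 : ∀ i ∈ Finset.Icc 1 n, SA i = 1 → SA (LF i) = n)
    (hL : ∀ i ∈ Finset.Icc 1 n, L i = idx T (SA (LF i)))
    {c i : ℕ} (hc : c ≠ idx T n) (hi : i ∈ Finset.Icc 1 n) :
    L i = c ↔ 2 ≤ SA i ∧ idx T (SA i - 1) = c := by
  have hSAi := Finset.mem_Icc.1 (hSA_mem i hi)
  rw [hL i hi]
  by_cases h1 : SA i = 1
  · rw [hLF1 i hi h1, h1]
    exact ⟨fun h => absurd h.symm hc, fun h => absurd h.1 (by omega)⟩
  · rw [hLF i hi h1]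
    exact ⟨fun h => ⟨by omega, h⟩, And.right⟩

theorem forall_card_occF_cons_lt_iff
    (halpha : ∀ c ∈ T, c ∈ Finset.Icc 1 σ)
    (hdollar : ∀ i ∈ Finset.Icc 1 (T.length - 1), idx T i ≠ idx T T.length)
    (hSA : ∀ i ∈ Finset.Icc b e, SA i ∈ Finset.Icc 1 T.length)
    (hLc : ∀ c, c ≠ idx T T.length → ∀ i ∈ Finset.Icc b e,
      (L i = c ↔ 2 ≤ SA i ∧ idx T (SA i - 1) = c))
    (hOcc : OccF T P = (Finset.Icc b e).image SA) (h2 : 2 ≤ (OccF T P).card) :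
    (∀ c ∈ Finset.Icc 1 σ, (OccF T (c :: P)).card < (OccF T P).card) ↔
      ¬ ∀ i ∈ Finset.Icc b e, L i = L b := by
  simp_rw [card_occF_cons_lt_iff, hOcc, Finset.exists_mem_image]
  obtain ⟨j, hj, hj1⟩ := Finset.exists_mem_ne h2 1
  obtain ⟨i₀, hi₀, rfl⟩ := Finset.mem_image.1 (hOcc ▸ hj)
  have hb : b ∈ Finset.Icc b e := Finset.left_mem_Icc.2 (Finset.nonempty_Icc.1 ⟨i₀, hi₀⟩)
  constructor
  · intro hmax hconst
    have hSAi₀ := Finset.mem_Icc.1 (hSA i₀ hi₀)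
    have hc : idx T (SA i₀ - 1) ≠ idx T T.length :=
      hdollar _ (Finset.mem_Icc.2 ⟨by omega, by omega⟩)
    have hLi₀ := (hLc _ hc i₀ hi₀).2 ⟨by omega, rfl⟩
    obtain ⟨i, hi, hnot⟩ :=
      hmax _ (halpha (idx T (SA i₀ - 1)) (idx_mem (by omega) (by omega)))
    exact hnot ((hLc _ hc i hi).1 ((hconst i hi).trans ((hconst i₀ hi₀).symm.trans hLi₀)))
  · intro hne c _
    by_contra! hprec
    have hSAb := Finset.mem_Icc.1 (hSA b hb)
    obtain ⟨hSAb2, hcb⟩ := hprec b hb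
    have hc : c ≠ idx T T.length :=
      hcb ▸ hdollar (SA b - 1) (Finset.mem_Icc.2 ⟨by omega, by omega⟩)
    exact hne fun i hi =>
      ((hLc c hc i hi).2 (hprec i hi)).trans ((hLc c hc b hb).2 (hprec b hb)).symm

end SuffixArray

theorem forall_Ioc_eq_pred_iff {α : Type*} {f : ℕ → α} {b e : ℕ} :
    (∀ j ∈ Finset.Ioc b e, f j = f (j - 1)) ↔ ∀ i ∈ Finset.Icc b e, f i = f b := by
  constructor
  · intro h i hi
    obtain ⟨hbi, hie⟩ := Finset.mem_Icc.1 hi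
    induction i, hbi using Nat.le_induction with
    | base => rfl
    | succ i hbi ih =>
      rw [h (i + 1) (Finset.mem_Ioc.2 ⟨by omega, hie⟩), Nat.add_sub_cancel]
      exact ih (Finset.mem_Icc.2 ⟨hbi, by omega⟩) (by omega)
  · intro h j hj
    obtain ⟨hbj, hje⟩ := Finset.mem_Ioc.1 hj
    rw [h j (Finset.mem_Icc.2 ⟨hbj.le, hje⟩), h (j - 1) (Finset.mem_Icc.2 ⟨by omega, by omega⟩)]

theorem rankOf_eq_rankOf_iff {S : Finset ℕ} {b e : ℕ} (hbe : b ≤ e) :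
    rankOf S b = rankOf S e ↔ ∀ j ∈ S, j ≤ e → j ≤ b := by
  have hsub : S.filter (· ≤ b) ⊆ S.filter (· ≤ e) :=
    Finset.monotone_filter_right S fun _ _ h => h.trans hbe
  constructor
  · intro h j hj hje
    have heq := Finset.eq_of_subset_of_card_le hsub h.ge
    have hjb : j ∈ S.filter (· ≤ b) := heq ▸ Finset.mem_filter.2 ⟨hj, hje⟩
    exact (Finset.mem_filter.1 hjb).2
  · intro h
    exact congrArg Finset.card
      (Finset.filter_congr fun j hj => ⟨fun hjb => hjb.trans hbe, h j hj⟩)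

theorem rankOf_sstartSet_eq_iff {n b e : ℕ} {L : ℕ → ℕ} (hb : 1 ≤ b) (hbe : b ≤ e)
    (he : e ≤ n) :
    rankOf (SstartSet n L) b = rankOf (SstartSet n L) e ↔ ∀ i ∈ Finset.Icc b e, L i = L b := by
  rw [rankOf_eq_rankOf_iff hbe, ← forall_Ioc_eq_pred_iff]
  constructor
  · intro h j hj
    obtain ⟨hbj, hje⟩ := Finset.mem_Ioc.1 hj
    by_contra hne
    have := h j (Finset.mem_filter.2 ⟨Finset.mem_Icc.2 ⟨by omega, by omega⟩, Or.inr hne⟩) hje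
    omega
  · intro h j hj hje
    by_contra hjb
    rcases (Finset.mem_filter.1 hj).2 with rfl | hne
    · omega
    · exact hne (h j (Finset.mem_Ioc.2 ⟨by omega, hje⟩))

theorem stmt13_general
    (σ n : ℕ) (T : List ℕ)
    (hlen : T.length = n)
    (halpha : ∀ c ∈ T, c ∈ Finset.Icc 1 σ)
    (hdollar : ∀ i ∈ Finset.Icc 1 (n - 1), idx T i ≠ idx T n)
    (SA : ℕ → ℕ)
    (hSA_mem : ∀ i ∈ Finset.Icc 1 n, SA i ∈ Finset.Icc 1 n)
    (hSA_surj : ∀ j ∈ Finset.Icc 1 n, ∃ i ∈ Finset.Icc 1 n, SA i = j)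
    (LF : ℕ → ℕ)
    (hLF : ∀ i ∈ Finset.Icc 1 n, SA i ≠ 1 → SA (LF i) = SA i - 1)
    (hLF1 : ∀ i ∈ Finset.Icc 1 n, SA i = 1 → SA (LF i) = n)
    (L : ℕ → ℕ)
    (hL : ∀ i ∈ Finset.Icc 1 n, L i = idx T (SA (LF i)))
    (P : List ℕ) (hPne : P ≠ [])
    (b e : ℕ) (hbe : isIntervalOf n T SA P b e) :
    (2 ≤ (OccF T P).card ∧
      ∀ c ∈ Finset.Icc 1 σ,
        (OccF T (c :: P)).card < (OccF T P).card ∧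
        (OccF T (P ++ [c])).card < (OccF T P).card)
    ↔ (2 ≤ (childrenSet σ T P).ncard ∧
        rankOf (SstartSet n L) b ≠ rankOf (SstartSet n L) e) := by
  subst hlen
  have hOcc := occF_eq_image_of_isIntervalOf hSA_mem hSA_surj hPne hbe
  obtain ⟨hb, he, -⟩ := hbe
  have hleft (h2 : 2 ≤ (OccF T P).card) :
      (∀ c ∈ Finset.Icc 1 σ, (OccF T (c :: P)).card < (OccF T P).card) ↔
        rankOf (SstartSet T.length L) b ≠ rankOf (SstartSet T.length L) e := by
    have hbe : b ≤ e := by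
      have hne : (OccF T P).Nonempty := Finset.card_pos.1 (by omega)
      rwa [hOcc, Finset.image_nonempty, Finset.nonempty_Icc] at hne
    have hIcc : Finset.Icc b e ⊆ Finset.Icc 1 T.length := Finset.Icc_subset_Icc hb he
    rw [Ne, rankOf_sstartSet_eq_iff hb hbe he]
    exact forall_card_occF_cons_lt_iff halpha hdollar (fun i hi => hSA_mem i (hIcc hi))
      (fun c hc i hi => bwt_eq_iff_of_ne_last hSA_mem hLF hLF1 hL hc (hIcc hi)) hOcc h2
  rw [two_le_ncard_childrenSet_iff halpha hdollar hPne]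
  constructor
  · rintro ⟨h2, h⟩
    exact ⟨⟨h2, fun c hc => (h c hc).2⟩, (hleft h2).1 fun c hc => (h c hc).1⟩
  · rintro ⟨⟨h2, h⟩, hrank⟩
    exact ⟨h2, fun c hc => ⟨(hleft h2).2 hrank c hc, h c hc⟩⟩

theorem stmt13
    (σ n : ℕ) (T : List ℕ)
    (hn : 2 ≤ n) (hlen : T.length = n)
    (halpha : ∀ c ∈ T, c ∈ Finset.Icc 1 σ)
    (hocc : ∀ c ∈ Finset.Icc 1 σ, c ∈ T)
    (hdollar : ∀ i ∈ Finset.Icc 1 (n - 1), idx T i ≠ idx T n)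
    (SA : ℕ → ℕ)
    (hSA_mem : ∀ i ∈ Finset.Icc 1 n, SA i ∈ Finset.Icc 1 n)
    (hSA_surj : ∀ j ∈ Finset.Icc 1 n, ∃ i ∈ Finset.Icc 1 n, SA i = j)
    (hSA_sorted : ∀ i j, i ∈ Finset.Icc 1 n → j ∈ Finset.Icc 1 n → i < j →
      List.Lex (· < ·) (sufx T (SA i)) (sufx T (SA j)))
    (LF : ℕ → ℕ)
    (hLF_mem : ∀ i ∈ Finset.Icc 1 n, LF i ∈ Finset.Icc 1 n)
    (hLF : ∀ i ∈ Finset.Icc 1 n, SA i ≠ 1 → SA (LF i) = SA i - 1)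
    (hLF1 : ∀ i ∈ Finset.Icc 1 n, SA i = 1 → SA (LF i) = n)
    (L : ℕ → ℕ)
    (hL : ∀ i ∈ Finset.Icc 1 n, L i = idx T (SA (LF i)))
    (P : List ℕ) (hPne : P ≠ []) (hPsub : P <:+: T)
    (b e : ℕ) (hbe : isIntervalOf n T SA P b e) :
    (2 ≤ (OccF T P).card ∧
      ∀ c ∈ Finset.Icc 1 σ,
        (OccF T (c :: P)).card < (OccF T P).card ∧
        (OccF T (P ++ [c])).card < (OccF T P).card)
    ↔ (2 ≤ (childrenSet σ T P).ncard ∧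
        rankOf (SstartSet n L) b ≠ rankOf (SstartSet n L) e) :=
  stmt13_general σ n T hlen halpha hdollar SA hSA_mem hSA_surj LF hLF hLF1 L hL P hPne b e hbe
end
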